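/- arXiv:1404.1090 — 8 statements merged into one kernel-verified Lean document; each statement's English description precedes it below -/
import Mathlib

section
/- Let n ≥ 1, let Ω ⊆ ℝⁿ be a bounded open set, let μ and ν be Borel probability measures on ℝⁿ, absolutely continuous with respect to Lebesgue measure, with spt μ ⊆ Ω, and let u be a Brenier solution on Ω pushing μ forward to ν. If spt ν contains no convex hole, then u has no isolated singular point x₀ ∈ int(spt μ) at which the subdifferential ∂u(x₀) has nonempty interior (equivalently, at which the convex set ∂u(x₀) has affine dimension n). -/
open MeasureTheory Set Metric RealInnerProductSpace

noncomputable section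

/-- The (global) subdifferential of `u : Ω → ℝ` at `x`:
`∂u(x) = {p | ∀ y ∈ Ω, u y ≥ u x + ⟨p, y - x⟩}`. -/
def subdiff {n : ℕ} (Ω : Set (EuclideanSpace ℝ (Fin n))) (u : EuclideanSpace ℝ (Fin n) → ℝ)
    (x : EuclideanSpace ℝ (Fin n)) : Set (EuclideanSpace ℝ (Fin n)) :=
  {p | ∀ y ∈ Ω, u x + ⟪p, y - x⟫ ≤ u y}

/-- The support of a Borel measure: points all of whose open neighborhoods have
positive measure. -/
def msupport {n : ℕ} (μ : Measure (EuclideanSpace ℝ (Fin n))) :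
    Set (EuclideanSpace ℝ (Fin n)) :=
  {x | ∀ U : Set (EuclideanSpace ℝ (Fin n)), IsOpen U → x ∈ U → μ U ≠ 0}

/-- A Brenier solution on `Ω` pushing `μ` forward to `ν`: a convex function `u` on `Ω`
(expressed by the existence of a global supporting affine function at each point of `Ω`),
with `spt μ ⊆ Ω`, whose gradient map pushes `μ` forward to `ν` and maps points of
differentiability in `spt μ` into `spt ν`. -/
structure IsBrenierSol {n : ℕ} (Ω : Set (EuclideanSpace ℝ (Fin n)))
    (μ ν : Measure (EuclideanSpace ℝ (Fin n))) (u : EuclideanSpace ℝ (Fin n) → ℝ) : Prop where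
  convex : ∀ x ∈ Ω, (subdiff Ω u x).Nonempty
  support_subset : msupport μ ⊆ Ω
  map_grad : μ.map (fun x => gradient u x) = ν
  grad_mem_support : ∀ x ∈ msupport μ, DifferentiableAt ℝ u x → gradient u x ∈ msupport ν

/-- `x₀` is an isolated singular point of `u` (as a function on `Ω`): `u` is not
differentiable at `x₀`, but is differentiable on `N \ {x₀}` for some open
neighborhood `N ⊆ Ω` of `x₀`. -/
def IsIsolatedSingPt {n : ℕ} (Ω : Set (EuclideanSpace ℝ (Fin n)))
    (u : EuclideanSpace ℝ (Fin n) → ℝ) (x₀ : EuclideanSpace ℝ (Fin n)) : Prop :=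
  x₀ ∈ Ω ∧ ¬ DifferentiableAt ℝ u x₀ ∧
    ∃ N : Set (EuclideanSpace ℝ (Fin n)), N ⊆ Ω ∧ IsOpen N ∧ x₀ ∈ N ∧
      ∀ x ∈ N \ {x₀}, DifferentiableAt ℝ u x

/-- `O` is a hole in `A`: a nonempty bounded open connected set disjoint from the interior
of `A` whose frontier is contained in the frontier of `A`. -/
def IsHole {n : ℕ} (A O : Set (EuclideanSpace ℝ (Fin n))) : Prop :=
  O.Nonempty ∧ IsOpen O ∧ IsConnected O ∧ Bornology.IsBounded O ∧
    O ∩ interior A = ∅ ∧ frontier O ⊆ frontier A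

section AuxLemmas

variable {n : ℕ} {Ω : Set (EuclideanSpace ℝ (Fin n))} {u : EuclideanSpace ℝ (Fin n) → ℝ}
  {x x₀ p : EuclideanSpace ℝ (Fin n)}

lemma aux_subdiff_convex : Convex ℝ (subdiff Ω u x) := by
  intro p hp q hq a b ha hb hab y hy
  have h1 := hp y hy
  have h2 := hq y hy
  have h3 : ⟪a • p + b • q, y - x⟫ = a * ⟪p, y - x⟫ + b * ⟪q, y - x⟫ := by
    rw [inner_add_left, real_inner_smul_left, real_inner_smul_left]
  rw [h3]
  have e1 : a * u x + b * u x = u x := by rw [← add_mul, hab, one_mul]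
  have e2 : a * u y + b * u y = u y := by rw [← add_mul, hab, one_mul]
  nlinarith [mul_le_mul_of_nonneg_left h1 ha, mul_le_mul_of_nonneg_left h2 hb]

lemma aux_subdiff_closed : IsClosed (subdiff Ω u x) := by
  have : subdiff Ω u x = ⋂ y ∈ Ω, {p | u x + ⟪p, y - x⟫ ≤ u y} := by
    ext p; simp [subdiff]
  rw [this]
  refine isClosed_biInter fun y hy => ?_
  exact isClosed_le (continuous_const.add ((continuous_id.inner continuous_const))) continuous_const

lemma aux_compl_msupport (μ : Measure (EuclideanSpace ℝ (Fin n))) :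
    (msupport μ)ᶜ = ⋃₀ {U | IsOpen U ∧ μ U = 0} := by
  ext z
  simp only [mem_compl_iff, msupport, mem_setOf_eq, not_forall, mem_sUnion]
  constructor
  · rintro ⟨U, hUo, hzU, hU0⟩
    exact ⟨U, ⟨hUo, not_not.1 hU0⟩, hzU⟩
  · rintro ⟨U, ⟨hUo, hU0⟩, hzU⟩
    exact ⟨U, hUo, hzU, not_not.2 hU0⟩

lemma aux_msupport_closed (μ : Measure (EuclideanSpace ℝ (Fin n))) : IsClosed (msupport μ) := by
  rw [← isOpen_compl_iff, aux_compl_msupport]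
  exact isOpen_sUnion fun U hU => hU.1

lemma aux_measure_compl_msupport (μ : Measure (EuclideanSpace ℝ (Fin n))) :
    μ (msupport μ)ᶜ = 0 := by
  obtain ⟨T, hTc, hTS, hTU⟩ :=
    TopologicalSpace.isOpen_sUnion_countable {U | IsOpen U ∧ μ U = 0} (fun U hU => hU.1)
  rw [aux_compl_msupport, ← hTU, sUnion_eq_biUnion]
  exact (measure_biUnion_null_iff hTc).2 fun U hU => (hTS hU).2

lemma aux_three_point (hc : ∀ z ∈ Ω, (subdiff Ω u z).Nonempty) {y z : EuclideanSpace ℝ (Fin n)}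
    (hx : x ∈ Ω) (hy : y ∈ Ω) (hz : z ∈ Ω) {a b : ℝ} (ha : 0 ≤ a) (hb : 0 ≤ b)
    (hab : a + b = 1) (hzc : z = a • x + b • y) : u z ≤ a * u x + b * u y := by
  obtain ⟨p, hp⟩ := hc z hz
  have h1 := hp x hx
  have h2 := hp y hy
  have hsum : a * ⟪p, x - z⟫ + b * ⟪p, y - z⟫ = 0 := by
    rw [← real_inner_smul_right, ← real_inner_smul_right, ← inner_add_right]
    have hz0 : a • (x - z) + b • (y - z) = 0 := by
      have hb' : b = 1 - a := by linarith
      subst hb' hzc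
      module
    rw [hz0, inner_zero_right]
  have e1 : a * u z + b * u z = u z := by rw [← add_mul, hab, one_mul]
  nlinarith [mul_le_mul_of_nonneg_left h1 ha, mul_le_mul_of_nonneg_left h2 hb]

lemma aux_convexOn (hc : ∀ z ∈ Ω, (subdiff Ω u z).Nonempty) {S : Set (EuclideanSpace ℝ (Fin n))}
    (hS : Convex ℝ S) (hSΩ : S ⊆ Ω) : ConvexOn ℝ S u := by
  refine ⟨hS, fun x hx y hy a b ha hb hab => ?_⟩
  exact aux_three_point hc (hSΩ hx) (hSΩ hy) (hSΩ (hS hx hy ha hb hab)) ha hb hab rfl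

lemma aux_subdiff_mono {S : Set (EuclideanSpace ℝ (Fin n))} (hS : S ⊆ Ω) :
    subdiff Ω u x ⊆ subdiff S u x := fun p hp y hy => hp y (hS hy)

lemma aux_localmin_gradient (h : IsLocalMin (fun y => u y - ⟪p, y⟫) x)
    (hd : DifferentiableAt ℝ u x) : gradient u x = p := by
  have hinner : DifferentiableAt ℝ (fun y : EuclideanSpace ℝ (Fin n) => ⟪p, y⟫) x :=
    (innerSL ℝ p).differentiableAt
  have h0 : fderiv ℝ (fun y => u y - ⟪p, y⟫) x = 0 := h.fderiv_eq_zero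
  have h1 : fderiv ℝ (fun y => u y - ⟪p, y⟫) x = fderiv ℝ u x - innerSL ℝ p := by
    rw [fderiv_fun_sub hd hinner]
    congr 1
    exact (innerSL ℝ p).fderiv
  have h2 : fderiv ℝ u x = innerSL ℝ p := by
    rw [h1] at h0
    exact sub_eq_zero.1 h0
  have h3 : HasGradientAt u p x := by
    rw [hasGradientAt_iff_hasFDerivAt]
    have : (InnerProductSpace.toDual ℝ (EuclideanSpace ℝ (Fin n))) p = innerSL ℝ p := by
      ext y; simp [InnerProductSpace.toDual_apply_apply]
    rw [this, ← h2]
    exact hd.hasFDerivAt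
  exact h3.gradient

lemma aux_subdiff_localmin {S : Set (EuclideanSpace ℝ (Fin n))} (hx : x ∈ interior S)
    (hp : p ∈ subdiff S u x) : IsLocalMin (fun y => u y - ⟪p, y⟫) x := by
  have hnhds : S ∈ nhds x := mem_interior_iff_mem_nhds.1 hx
  filter_upwards [hnhds] with y hy
  have := hp y hy
  rw [inner_sub_right] at this
  linarith

lemma aux_ball_subdiff
    (hthree : ∀ (x' y' z' : EuclideanSpace ℝ (Fin n)), x' ∈ Ω → y' ∈ Ω → z' ∈ Ω →
      ∀ a b : ℝ, 0 ≤ a → 0 ≤ b → a + b = 1 → z' = a • x' + b • y' → u z' ≤ a * u x' + b * u y')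
    {δ : ℝ} (hδ : 0 < δ) (hball : closedBall x₀ δ ⊆ Ω) :
    subdiff (closedBall x₀ δ) u x₀ ⊆ subdiff Ω u x₀ := by
  intro p hp y hy
  rcases eq_or_ne y x₀ with rfl | hne
  · simp
  · have hyx : 0 < ‖y - x₀‖ := by
      rw [norm_pos_iff]; exact sub_ne_zero.2 hne
    set t : ℝ := min 1 (δ / ‖y - x₀‖) with ht
    have ht0 : 0 < t := lt_min one_pos (div_pos hδ hyx)
    have ht1 : t ≤ 1 := min_le_left _ _
    set z : EuclideanSpace ℝ (Fin n) := x₀ + t • (y - x₀) with hz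
    have hzball : z ∈ closedBall x₀ δ := by
      rw [mem_closedBall, dist_eq_norm]
      have hzx : z - x₀ = t • (y - x₀) := by rw [hz]; abel
      rw [hzx, norm_smul, Real.norm_eq_abs, abs_of_pos ht0]
      calc t * ‖y - x₀‖ ≤ (δ / ‖y - x₀‖) * ‖y - x₀‖ := by
            apply mul_le_mul_of_nonneg_right (min_le_right _ _) hyx.le
        _ = δ := div_mul_cancel₀ _ hyx.ne'
    have hzΩ : z ∈ Ω := hball hzball
    have hcomb : z = (1 - t) • x₀ + t • y := by rw [hz]; module
    have h3 := hthree x₀ y z (hball (mem_closedBall_self hδ.le)) hy hzΩ (1 - t) t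
      (by linarith) ht0.le (by ring) hcomb
    have h4 := hp z hzball
    have h5 : ⟪p, z - x₀⟫ = t * ⟪p, y - x₀⟫ := by
      have hzx : z - x₀ = t • (y - x₀) := by rw [hz]; abel
      rw [hzx, real_inner_smul_right]
    rw [h5] at h4
    have := h4.trans h3
    nlinarith

end AuxLemmas

set_option maxHeartbeats 2000000 in
/-- **No isolated singular point with full-dimensional subdifferential (Euclidean case).**
If the support of the target measure has no convex hole, a Brenier solution has no isolated
singular point in the interior of the support of the source measure at which the
subdifferential has nonempty interior. -/
theorem no_full_dimensional_subdifferential_at_isolated_singularity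
    (n : ℕ) (hn : 1 ≤ n)
    (Ω : Set (EuclideanSpace ℝ (Fin n)))
    (hΩo : IsOpen Ω) (hΩb : Bornology.IsBounded Ω)
    (μ ν : Measure (EuclideanSpace ℝ (Fin n)))
    (hμp : IsProbabilityMeasure μ) (hνp : IsProbabilityMeasure ν)
    (hμac : μ ≪ volume) (hνac : ν ≪ volume)
    (hμs : msupport μ ⊆ Ω)
    (u : EuclideanSpace ℝ (Fin n) → ℝ) (hu : IsBrenierSol Ω μ ν u)
    (hnohole : ∀ O : Set (EuclideanSpace ℝ (Fin n)), IsHole (msupport ν) O → ¬ Convex ℝ O) :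
    ¬ ∃ x₀ ∈ interior (msupport μ),
        IsIsolatedSingPt Ω u x₀ ∧ (interior (subdiff Ω u x₀)).Nonempty := by
  rintro ⟨x₀, hx₀s, ⟨hx₀Ω, hx₀nd, N, hNΩ, hNopen, hx₀N, hNdiff⟩, p₀, hp₀⟩
  classical
  set K := subdiff Ω u x₀ with hKdef
  have hKconv : Convex ℝ K := aux_subdiff_convex
  have hKclosed : IsClosed K := aux_subdiff_closed
  have hμcomp : μ (msupport μ)ᶜ = 0 := aux_measure_compl_msupport μ
  have hνclosed : IsClosed (msupport ν) := aux_msupport_closed ν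
  have hthree : ∀ (x' y' z' : EuclideanSpace ℝ (Fin n)), x' ∈ Ω → y' ∈ Ω → z' ∈ Ω →
      ∀ a b : ℝ, 0 ≤ a → 0 ≤ b → a + b = 1 → z' = a • x' + b • y' →
        u z' ≤ a * u x' + b * u y' :=
    fun x' y' z' hx' hy' hz' a b ha hb hab hzc =>
      aux_three_point hu.convex hx' hy' hz' ha hb hab hzc
  -- AEMeasurable gradient
  have hgae : AEMeasurable (fun x => gradient u x) μ := by
    by_contra h
    have hmap := hu.map_grad
    rw [Measure.map_of_not_aemeasurable h] at hmap
    have : (ν univ : ENNReal) = 1 := measure_univ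
    rw [← hmap] at this
    simp at this
  have hmap : ∀ W : Set (EuclideanSpace ℝ (Fin n)), MeasurableSet W →
      ν W = μ ((fun x => gradient u x) ⁻¹' W) := by
    intro W hW
    rw [← hu.map_grad, Measure.map_apply_of_aemeasurable hgae hW]
  -- choice of δ
  have hopen2 : IsOpen (N ∩ interior (msupport μ)) := hNopen.inter isOpen_interior
  obtain ⟨δ', hδ'pos, hball'⟩ := Metric.isOpen_iff.1 hopen2 x₀ ⟨hx₀N, hx₀s⟩
  set δ : ℝ := δ' / 2 with hδdef
  have hδpos : 0 < δ := by positivity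
  have hcb' : closedBall x₀ δ ⊆ ball x₀ δ' := by
    intro z hz
    rw [mem_closedBall] at hz
    rw [mem_ball]
    have : δ < δ' := by rw [hδdef]; linarith
    linarith
  have hballN : ball x₀ δ' ⊆ N := fun z hz => (hball' hz).1
  have hballμ : ball x₀ δ' ⊆ msupport μ := fun z hz => interior_subset (hball' hz).2
  have hballΩ : ball x₀ δ' ⊆ Ω := fun z hz => hμs (hballμ hz)
  have hcbΩ : closedBall x₀ δ ⊆ Ω := fun z hz => hballΩ (hcb' hz)
  have hcbμ : closedBall x₀ δ ⊆ msupport μ := fun z hz => hballμ (hcb' hz)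
  have hcbN : closedBall x₀ δ ⊆ N := fun z hz => hballN (hcb' hz)
  -- continuity
  have hcont : ContinuousOn u (ball x₀ δ') :=
    (aux_convexOn hu.convex (convex_ball x₀ δ') hballΩ).continuousOn isOpen_ball
  have hcontcb : ContinuousOn u (closedBall x₀ δ) := hcont.mono hcb'
  -- gradient of differentiable points lies in the subdifferential
  have hgradsub : ∀ x ∈ Ω, DifferentiableAt ℝ u x → gradient u x ∈ subdiff Ω u x := by
    intro x hx hd
    obtain ⟨p, hp⟩ := hu.convex x hx
    have hloc : IsLocalMin (fun y => u y - ⟪p, y⟫) x :=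
      aux_subdiff_localmin (by rw [hΩo.interior_eq]; exact hx) hp
    have := aux_localmin_gradient hloc hd
    rwa [this]
  -- disjointness: interior K doesn't meet other subdifferentials
  have hdisj : ∀ x ∈ Ω, x ≠ x₀ → ∀ q ∈ interior K, q ∉ subdiff Ω u x := by
    intro x hx hne q hq hqx
    obtain ⟨ε, hεpos, hball⟩ := Metric.isOpen_iff.1 isOpen_interior q hq
    have hxx : 0 < ‖x - x₀‖ := by rw [norm_pos_iff]; exact sub_ne_zero.2 hne
    set d : EuclideanSpace ℝ (Fin n) := ‖x - x₀‖⁻¹ • (x - x₀) with hd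
    have hq2 : q + (ε / 2) • d ∈ K := by
      apply interior_subset
      apply hball
      rw [mem_ball, dist_eq_norm]
      have : q + (ε / 2) • d - q = (ε / 2) • d := by abel
      rw [this, norm_smul, Real.norm_eq_abs, abs_of_pos (by positivity)]
      have hdn : ‖d‖ = 1 := by
        rw [hd, norm_smul, Real.norm_eq_abs, abs_of_pos (by positivity)]
        field_simp
      rw [hdn]; linarith
    have h1 := hq2 x hx
    have h2 := hqx x₀ hx₀Ω
    have hinner1 : ⟪q + (ε / 2) • d, x - x₀⟫
        = ⟪q, x - x₀⟫ + (ε / 2) * ‖x - x₀‖ := by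
      rw [inner_add_left, real_inner_smul_left]
      congr 1
      rw [hd, real_inner_smul_left, real_inner_self_eq_norm_mul_norm]
      field_simp
    have hinner2 : ⟪q, x₀ - x⟫ = -⟪q, x - x₀⟫ := by
      rw [← inner_neg_right]
      congr 1
      abel
    rw [hinner1] at h1
    rw [hinner2] at h2
    nlinarith
  -- interior K misses the support of ν
  have hIntK_spt : ∀ q, q ∈ interior K → q ∉ msupport ν := by
    intro q hqK hqν
    obtain ⟨ε, hεpos, hball⟩ := Metric.isOpen_iff.1 isOpen_interior q hqK
    haveI : Nontrivial (EuclideanSpace ℝ (Fin n)) := by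
      refine ⟨EuclideanSpace.single ⟨0, hn⟩ (1 : ℝ), 0, fun h => ?_⟩
      have := congrArg (fun v : EuclideanSpace ℝ (Fin n) => v ⟨0, hn⟩) h
      simp [EuclideanSpace.single_apply] at this
    have hvol0 : (volume : Measure (EuclideanSpace ℝ (Fin n))) {0} = 0 := measure_singleton 0
    have hν0 : ν {(0 : EuclideanSpace ℝ (Fin n))} = 0 := hνac hvol0
    have hνball : ν (ball q ε) ≠ 0 := hqν _ isOpen_ball (mem_ball_self hεpos)
    have hW : ν (ball q ε \ {0}) ≠ 0 := by
      rwa [measure_diff_null hν0]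
    have hWmeas : MeasurableSet (ball q ε \ {(0 : EuclideanSpace ℝ (Fin n))}) :=
      measurableSet_ball.diff (measurableSet_singleton 0)
    have hWμ : μ ((fun x => gradient u x) ⁻¹' (ball q ε \ {0})) ≠ 0 := by
      rw [← hmap _ hWmeas]; exact hW
    apply hWμ
    apply measure_mono_null _ hμcomp
    intro x hx
    simp only [mem_preimage, mem_diff, mem_ball, mem_singleton_iff] at hx
    by_contra hxs
    rw [notMem_compl_iff] at hxs
    have hxΩ : x ∈ Ω := hμs hxs
    have hxd : DifferentiableAt ℝ u x := by
      by_contra hnd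
      exact hx.2 (gradient_eq_zero_of_not_differentiableAt hnd)
    have hxne : x ≠ x₀ := by
      rintro rfl; exact hx₀nd hxd
    exact hdisj x hxΩ hxne (gradient u x)
      (hball (by rw [mem_ball]; exact hx.1)) (hgradsub x hxΩ hxd)
  -- boundedness of K
  have hKbdd : Bornology.IsBounded K := by
    obtain ⟨zmax, hzmax, hM⟩ := (isCompact_closedBall x₀ δ).exists_isMaxOn
      ⟨x₀, mem_closedBall_self hδpos.le⟩ hcontcb
    set M : ℝ := u zmax with hMdef
    have hux₀ : u x₀ ≤ M := hM (mem_closedBall_self hδpos.le)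
    have hsub : K ⊆ Metric.closedBall 0 ((M - u x₀) / δ) := by
      intro p hp
      rcases eq_or_ne p 0 with rfl | hp0
      · rw [mem_closedBall, dist_self]
        exact div_nonneg (by linarith) hδpos.le
      · have hpn : 0 < ‖p‖ := norm_pos_iff.2 hp0
        set y : EuclideanSpace ℝ (Fin n) := x₀ + (δ / ‖p‖) • p with hy
        have hyball : y ∈ closedBall x₀ δ := by
          rw [mem_closedBall, dist_eq_norm]
          have : y - x₀ = (δ / ‖p‖) • p := by rw [hy]; abel
          rw [this, norm_smul, Real.norm_eq_abs, abs_of_pos (by positivity)]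
          rw [div_mul_cancel₀ _ hpn.ne']
        have h1 := hp y (hcbΩ hyball)
        have h2 : ⟪p, y - x₀⟫ = δ * ‖p‖ := by
          have : y - x₀ = (δ / ‖p‖) • p := by rw [hy]; abel
          rw [this, real_inner_smul_right, real_inner_self_eq_norm_mul_norm]
          field_simp
        rw [h2] at h1
        have h3 : u y ≤ M := hM hyball
        rw [mem_closedBall, dist_zero_right]
        rw [le_div_iff₀ hδpos]
        nlinarith
    exact (Metric.isBounded_closedBall).subset hsub
  -- the frontier inclusion: boundary of K is in the support of ν
  have hfrontier : ∀ q, q ∈ K → q ∉ interior K → q ∈ msupport ν := by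
    intro q hqK hqint
    have hcbsub : subdiff (closedBall x₀ δ) u x₀ ⊆ K := aux_ball_subdiff hthree hδpos hcbΩ
    have hqcb : q ∈ subdiff (closedBall x₀ δ) u x₀ := aux_subdiff_mono hcbΩ hqK
    have hqp₀ : q ≠ p₀ := fun h => hqint (h ▸ hp₀)
    set lam : ℝ := ‖q - p₀‖ with hlamdef
    have hlampos : 0 < lam := by
      rw [hlamdef, norm_pos_iff]; exact sub_ne_zero.2 hqp₀
    set dhat : EuclideanSpace ℝ (Fin n) := lam⁻¹ • (q - p₀) with hdhat
    have hdhatn : ‖dhat‖ = 1 := by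
      rw [hdhat, norm_smul, Real.norm_eq_abs, abs_of_pos (by positivity)]
      field_simp
      exact hlamdef.symm
    have hqeq : q = p₀ + lam • dhat := by
      rw [hdhat, smul_smul, mul_inv_cancel₀ hlampos.ne', one_smul]
      abel
    by_cases hcase : ∃ x₁ ∈ closedBall x₀ δ, x₁ ≠ x₀ ∧ u x₁ = u x₀ + ⟪q, x₁ - x₀⟫
    · -- contact point: midpoint trick
      obtain ⟨x₁, hx₁cb, hx₁ne, hx₁eq⟩ := hcase
      set m : EuclideanSpace ℝ (Fin n) := x₀ + (2 : ℝ)⁻¹ • (x₁ - x₀) with hm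
      have hmx₀ : m - x₀ = (2 : ℝ)⁻¹ • (x₁ - x₀) := by rw [hm]; abel
      have hmball : m ∈ ball x₀ δ := by
        rw [mem_ball, dist_eq_norm, hmx₀, norm_smul, Real.norm_eq_abs]
        rw [mem_closedBall, dist_eq_norm] at hx₁cb
        rw [abs_of_pos (by norm_num : (0:ℝ) < 2⁻¹)]
        nlinarith [norm_nonneg (x₁ - x₀)]
      have hmcb : m ∈ closedBall x₀ δ := ball_subset_closedBall hmball
      have hmne : m ≠ x₀ := by
        intro h
        apply hx₁ne
        have : m - x₀ = 0 := by rw [h]; abel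
        rw [hmx₀] at this
        have := smul_eq_zero.1 this
        rcases this with h' | h'
        · norm_num at h'
        · exact sub_eq_zero.1 h'
      have hcomb : m = (2 : ℝ)⁻¹ • x₀ + (2 : ℝ)⁻¹ • x₁ := by rw [hm]; module
      have hle : u m ≤ (2 : ℝ)⁻¹ * u x₀ + (2 : ℝ)⁻¹ * u x₁ :=
        hthree x₀ x₁ m hx₀Ω (hcbΩ hx₁cb) (hcbΩ hmcb) _ _ (by norm_num) (by norm_num)
          (by norm_num) hcomb
      have hge : u x₀ + ⟪q, m - x₀⟫ ≤ u m := hqcb m hmcb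
      have hinner : ⟪q, m - x₀⟫ = (2 : ℝ)⁻¹ * ⟪q, x₁ - x₀⟫ := by
        rw [hmx₀, real_inner_smul_right]
      have hmeq : u m = u x₀ + ⟪q, m - x₀⟫ := by
        apply le_antisymm _ hge
        rw [hinner]
        rw [hx₁eq] at hle
        linarith
      have hqm : q ∈ subdiff (closedBall x₀ δ) u m := by
        intro y hy
        have h1 := hqcb y hy
        have h2 : ⟪q, m - x₀⟫ + ⟪q, y - m⟫ = ⟪q, y - x₀⟫ := by
          rw [← inner_add_right]
          congr 1
          abel
        rw [hmeq]
        linarith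
      have hmdiff : DifferentiableAt ℝ u m := hNdiff m ⟨hcbN hmcb, by simp [hmne]⟩
      have hloc : IsLocalMin (fun y => u y - ⟪q, y⟫) m := by
        apply aux_subdiff_localmin _ hqm
        rw [interior_closedBall x₀ hδpos.ne']
        exact hmball
      have hgrad : gradient u m = q := aux_localmin_gradient hloc hmdiff
      have := hu.grad_mem_support m (hcbμ hmcb) hmdiff
      rwa [hgrad] at this
    · -- no contact point: approximate by gradients
      push_neg at hcase
      have hstrict : ∀ x ∈ closedBall x₀ δ, x ≠ x₀ → u x₀ + ⟪q, x - x₀⟫ < u x := by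
        intro x hx hne
        rcases lt_or_eq_of_le (hqcb x hx) with h | h
        · exact h
        · exact absurd h.symm (hcase x hx hne)
      have hclos : q ∈ closure (msupport ν) := by
        rw [_root_.mem_closure_iff]
        intro o ho hqo
        obtain ⟨η, hηpos, hηsub⟩ := Metric.isOpen_iff.1 ho q hqo
        set ρ : ℝ := δ / 2 with hρdef
        have hρpos : 0 < ρ := by positivity
        have hρδ : ρ < δ := by rw [hρdef]; linarith
        set A : Set (EuclideanSpace ℝ (Fin n)) :=
          closedBall x₀ δ ∩ {x | ρ ≤ dist x x₀} with hA
        have hAcomp : IsCompact A :=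
          (isCompact_closedBall x₀ δ).inter_right
            (isClosed_le continuous_const (continuous_id.dist continuous_const))
        have hAne : A.Nonempty := by
          refine ⟨x₀ + ρ • dhat, ?_, ?_⟩
          · rw [mem_closedBall, dist_eq_norm]
            have : x₀ + ρ • dhat - x₀ = ρ • dhat := by abel
            rw [this, norm_smul, Real.norm_eq_abs, abs_of_pos hρpos, hdhatn]
            linarith
          · rw [mem_setOf_eq, dist_eq_norm]
            have : x₀ + ρ • dhat - x₀ = ρ • dhat := by abel
            rw [this, norm_smul, Real.norm_eq_abs, abs_of_pos hρpos, hdhatn]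
            simp
        have hgc : ContinuousOn (fun x => u x - (u x₀ + ⟪q, x - x₀⟫)) A := by
          apply ContinuousOn.sub
          · exact hcontcb.mono (fun z hz => hz.1)
          · apply Continuous.continuousOn
            exact continuous_const.add (continuous_const.inner
              (continuous_id.sub continuous_const))
        obtain ⟨zA, hzA, hzmin⟩ := hAcomp.exists_isMinOn hAne hgc
        set c : ℝ := u zA - (u x₀ + ⟪q, zA - x₀⟫) with hc
        have hcpos : 0 < c := by
          rw [hc]
          have : zA ≠ x₀ := by
            intro h
            have := hzA.2
            rw [mem_setOf_eq, h, dist_self] at this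
            linarith
          have := hstrict zA hzA.1 this
          linarith
        set e : ℝ := min (η / 2) (c / (2 * δ)) with he
        have hepos : 0 < e := by
          apply lt_min
          · positivity
          · positivity
        set lamt : ℝ := lam + e with hlamt
        set v : EuclideanSpace ℝ (Fin n) := p₀ + lamt • dhat with hv
        have hvq : v = q + e • dhat := by
          rw [hv, hqeq, hlamt, add_smul]
          abel
        have hvnot : v ∉ subdiff (closedBall x₀ δ) u x₀ := by
          intro hvmem
          have hvK : v ∈ K := hcbsub hvmem
          have hlamtpos : 0 < lamt := by rw [hlamt]; linarith
          have hq' : (1 - lam / lamt) • p₀ + (lam / lamt) • v = q := by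
            have h' : (1 - lam / lamt) • p₀ + (lam / lamt) • v
                = p₀ + (lam / lamt * lamt) • dhat := by
              rw [hv]; module
            rw [h', div_mul_cancel₀ _ hlamtpos.ne']
            exact hqeq.symm
          have hqmem : q ∈ interior K := by
            rw [← hq']
            apply hKconv.combo_interior_self_mem_interior hp₀ hvK
            · have hlt : lam / lamt < 1 := by
                rw [div_lt_one hlamtpos, hlamt]; linarith
              linarith
            · positivity
            · ring
          exact hqint hqmem
        have hvwit : ∃ y ∈ closedBall x₀ δ, u y < u x₀ + ⟪v, y - x₀⟫ := by
          by_contra hcon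
          push_neg at hcon
          exact hvnot (fun y hy => hcon y hy)
        obtain ⟨y₀, hy₀cb, hy₀⟩ := hvwit
        have hGc : ContinuousOn (fun x => u x - (u x₀ + ⟪v, x - x₀⟫)) (closedBall x₀ δ) := by
          apply ContinuousOn.sub hcontcb
          apply Continuous.continuousOn
          exact continuous_const.add (continuous_const.inner
            (continuous_id.sub continuous_const))
        obtain ⟨x₁, hx₁cb, hx₁min⟩ := (isCompact_closedBall x₀ δ).exists_isMinOn
          ⟨x₀, mem_closedBall_self hδpos.le⟩ hGc
        have hGx₁neg : u x₁ - (u x₀ + ⟪v, x₁ - x₀⟫) < 0 := by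
          have h := hx₁min hy₀cb
          simp only [mem_setOf_eq] at h
          linarith
        have hx₁ne : x₁ ≠ x₀ := by
          intro h
          rw [h] at hGx₁neg
          simp at hGx₁neg
        have hx₁close : dist x₁ x₀ < ρ := by
          by_contra hfar
          push_neg at hfar
          have hx₁A : x₁ ∈ A := ⟨hx₁cb, hfar⟩
          have h1 : c ≤ u x₁ - (u x₀ + ⟪q, x₁ - x₀⟫) := hzmin hx₁A
          have h2 : ⟪v, x₁ - x₀⟫ = ⟪q, x₁ - x₀⟫ + e * ⟪dhat, x₁ - x₀⟫ := by
            rw [hvq, inner_add_left, real_inner_smul_left]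
          have h3 : ⟪dhat, x₁ - x₀⟫ ≤ δ := by
            calc ⟪dhat, x₁ - x₀⟫ ≤ ‖dhat‖ * ‖x₁ - x₀‖ := real_inner_le_norm _ _
              _ = ‖x₁ - x₀‖ := by rw [hdhatn, one_mul]
              _ ≤ δ := by rw [mem_closedBall, dist_eq_norm] at hx₁cb; exact hx₁cb
          have h4 : e ≤ c / (2 * δ) := min_le_right _ _
          have h5 : e * ⟪dhat, x₁ - x₀⟫ ≤ e * δ := by
            apply mul_le_mul_of_nonneg_left h3 hepos.le
          have h6 : e * δ ≤ c / 2 := by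
            have h4' : e * (2 * δ) ≤ c := (le_div_iff₀ (by positivity : (0:ℝ) < 2 * δ)).1 h4
            linarith
          rw [h2] at hGx₁neg
          linarith
        have hx₁ball : x₁ ∈ ball x₀ δ := by
          rw [mem_ball]; linarith
        have hx₁diff : DifferentiableAt ℝ u x₁ :=
          hNdiff x₁ ⟨hcbN hx₁cb, by simp [hx₁ne]⟩
        have hloc : IsLocalMin (fun y => u y - ⟪v, y⟫) x₁ := by
          have hnhds : closedBall x₀ δ ∈ nhds x₁ :=
            mem_interior_iff_mem_nhds.1 (by rw [interior_closedBall x₀ hδpos.ne']; exact hx₁ball)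
          filter_upwards [hnhds] with y hy
          have h := hx₁min hy
          simp only [mem_setOf_eq] at h
          simp only [inner_sub_right] at h
          linarith
        have hgrad : gradient u x₁ = v := aux_localmin_gradient hloc hx₁diff
        have hvν : v ∈ msupport ν := by
          have := hu.grad_mem_support x₁ (hcbμ hx₁cb) hx₁diff
          rwa [hgrad] at this
        refine ⟨v, hηsub ?_, hvν⟩
        rw [mem_ball, dist_eq_norm, hvq]
        have : q + e • dhat - q = e • dhat := by abel
        rw [this, norm_smul, Real.norm_eq_abs, abs_of_pos hepos, hdhatn, mul_one]
        have : e ≤ η / 2 := min_le_left _ _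
        linarith
      rwa [hνclosed.closure_eq] at hclos
  -- assemble the hole
  have hOne : (interior K).Nonempty := ⟨p₀, hp₀⟩
  have hdisj2 : interior K ∩ msupport ν = ∅ := by
    rw [eq_empty_iff_forall_notMem]
    rintro z ⟨hz1, hz2⟩
    exact hIntK_spt z hz1 hz2
  have hHole : IsHole (msupport ν) (interior K) := by
    refine ⟨hOne, isOpen_interior, ⟨hOne, hKconv.interior.isPreconnected⟩,
      hKbdd.subset interior_subset, ?_, ?_⟩
    · rw [eq_empty_iff_forall_notMem]
      rintro z ⟨hz1, hz2⟩
      exact hIntK_spt z hz1 (interior_subset hz2)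
    · intro q hq
      have hqcl : q ∈ closure (interior K) := frontier_subset_closure hq
      have hqK : q ∈ K := by
        have : closure (interior K) ⊆ closure K := closure_mono interior_subset
        exact hKclosed.closure_eq ▸ this hqcl
      have hqnint : q ∉ interior K := by
        rw [IsOpen.frontier_eq isOpen_interior] at hq
        exact hq.2
      have hqν : q ∈ msupport ν := hfrontier q hqK hqnint
      rw [hνclosed.frontier_eq]
      refine ⟨hqν, fun hqintν => ?_⟩
      obtain ⟨z, hz1, hz2⟩ := _root_.mem_closure_iff.1 hqcl _ isOpen_interior hqintν
      exact hIntK_spt z hz2 (interior_subset hz1)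
  exact hnohole (interior K) hHole hKconv.interior
end
end

section
/- Let n ≥ 1, let Ω ⊆ ℝⁿ be a bounded open set, let μ and ν be Borel probability measures on ℝⁿ, absolutely continuous with respect to Lebesgue measure, with spt μ ⊆ Ω, and let u be a Brenier solution on Ω pushing μ forward to ν. If x₀ ∈ int(spt μ) is an isolated singular point of u at which the subdifferential ∂u(x₀) has nonempty interior, then the open set int(∂u(x₀)) is a hole in spt ν; that is, int(∂u(x₀)) is a nonempty bounded open connected set, disjoint from int(spt ν), whose frontier is contained in frontier(spt ν). -/
open MeasureTheory Set Metric RealInnerProductSpace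

set_option maxHeartbeats 1000000

noncomputable section

namespace BrenierHole

variable {n : ℕ} {Ω : Set (EuclideanSpace ℝ (Fin n))} {u : EuclideanSpace ℝ (Fin n) → ℝ}
  {x x₀ p q : EuclideanSpace ℝ (Fin n)}

local notation "E" => EuclideanSpace ℝ (Fin n)

lemma convex_subdiff : Convex ℝ (subdiff Ω u x) := by
  intro p hp q hq a b ha hb hab y hy
  have h1 := hp y hy
  have h2 := hq y hy
  have e : ⟪a • p + b • q, y - x⟫ = a * ⟪p, y - x⟫ + b * ⟪q, y - x⟫ := by
    rw [inner_add_left, real_inner_smul_left, real_inner_smul_left]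
  show u x + ⟪a • p + b • q, y - x⟫ ≤ u y
  rw [e]
  have hux : u x = a * u x + b * u x := by rw [← add_mul, hab, one_mul]
  have huy : a * u y + b * u y = u y := by rw [← add_mul, hab, one_mul]
  have k1 := mul_le_mul_of_nonneg_left h1 ha
  have k2 := mul_le_mul_of_nonneg_left h2 hb
  nlinarith [k1, k2]

lemma isClosed_subdiff : IsClosed (subdiff Ω u x) := by
  have : subdiff Ω u x = ⋂ y ∈ Ω, {p : E | u x + ⟪p, y - x⟫ ≤ u y} := by
    ext p; simp [subdiff]
  rw [this]
  exact isClosed_biInter fun y _ =>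
    isClosed_le (continuous_const.add ((continuous_id.inner continuous_const))) continuous_const

lemma isClosed_msupport (μ : Measure E) : IsClosed (msupport μ) := by
  rw [← isOpen_compl_iff, isOpen_iff_forall_mem_open]
  intro z hz
  simp only [msupport, mem_compl_iff, mem_setOf_eq, not_forall] at hz
  obtain ⟨U, hUo, hzU, hU0⟩ := hz
  rw [not_ne_iff] at hU0
  exact ⟨U, fun y hy hmem => hmem U hUo hy hU0, hUo, hzU⟩

lemma msupport_compl_null (μ : Measure E) : μ (msupport μ)ᶜ = 0 := by
  refine measure_null_of_locally_null _ fun z hz => ?_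
  simp only [msupport, mem_compl_iff, mem_setOf_eq, not_forall] at hz
  obtain ⟨U, hUo, hzU, hU0⟩ := hz
  rw [not_ne_iff] at hU0
  exact ⟨U, mem_nhdsWithin_of_mem_nhds (hUo.mem_nhds hzU), hU0⟩

lemma eq_gradient_of_mem_subdiff (hΩo : IsOpen Ω) (hx : x ∈ Ω)
    (hd : DifferentiableAt ℝ u x) (hp : p ∈ subdiff Ω u x) : p = gradient u x := by
  have hmin : IsLocalMin (fun y => u y - ⟪p, y⟫) x := by
    filter_upwards [hΩo.mem_nhds hx] with y hy
    have h := hp y hy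
    have e : ⟪p, y - x⟫ = ⟪p, y⟫ - ⟪p, x⟫ := inner_sub_right p y x
    show u x - ⟪p, x⟫ ≤ u y - ⟪p, y⟫
    linarith
  have hip : HasFDerivAt (fun y : E => ⟪p, y⟫) (innerSL ℝ p) x := by
    exact (innerSL ℝ p).hasFDerivAt
  have hF : HasFDerivAt (fun y => u y - ⟪p, y⟫) (fderiv ℝ u x - innerSL ℝ p) x :=
    hd.hasFDerivAt.sub hip
  have h0 := hmin.hasFDerivAt_eq_zero hF
  rw [sub_eq_zero] at h0
  have e2 : innerSL ℝ p = InnerProductSpace.toDual ℝ E p := by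
    ext y
    simp [InnerProductSpace.toDual_apply_apply]
  have : gradient u x = p := by
    rw [gradient, h0, e2, LinearIsometryEquiv.symm_apply_apply]
  exact this.symm

lemma gradient_mem_subdiff (hconv : ∀ z ∈ Ω, (subdiff Ω u z).Nonempty)
    (hΩo : IsOpen Ω) (hx : x ∈ Ω) (hd : DifferentiableAt ℝ u x) :
    gradient u x ∈ subdiff Ω u x := by
  obtain ⟨p, hp⟩ := hconv x hx
  exact (eq_gradient_of_mem_subdiff hΩo hx hd hp) ▸ hp

lemma convexOn_of_subdiff (hconv : ∀ z ∈ Ω, (subdiff Ω u z).Nonempty)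
    {s : Set E} (hsΩ : s ⊆ Ω) (hs : Convex ℝ s) : ConvexOn ℝ s u := by
  refine ⟨hs, fun y hy z hz a b ha hb hab => ?_⟩
  set m := a • y + b • z with hm
  have hmΩ : m ∈ Ω := hsΩ (hs hy hz ha hb hab)
  obtain ⟨r, hr⟩ := hconv m hmΩ
  have h1 := hr y (hsΩ hy)
  have h2 := hr z (hsΩ hz)
  have e0 : a • (y - m) + b • (z - m) = (a • y + b • z) - (a + b) • m := by module
  rw [hab, one_smul, ← hm, sub_self] at e0
  have e : a * ⟪r, y - m⟫ + b * ⟪r, z - m⟫ = 0 := by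
    rw [← real_inner_smul_right, ← real_inner_smul_right, ← inner_add_right, e0, inner_zero_right]
  show u m ≤ a • u y + b • u z
  simp only [smul_eq_mul]
  have hum : u m = a * u m + b * u m := by rw [← add_mul, hab, one_mul]
  nlinarith [mul_le_mul_of_nonneg_left h1 ha, mul_le_mul_of_nonneg_left h2 hb]

lemma eq_of_gradient_mem_interior (hx : x ∈ Ω) (hx₀ : x₀ ∈ Ω)
    (hp : p ∈ subdiff Ω u x) (hpi : p ∈ interior (subdiff Ω u x₀)) : x = x₀ := by
  by_contra hne
  obtain ⟨ε, hε, hball⟩ := Metric.isOpen_iff.1 isOpen_interior p hpi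
  have hd : x - x₀ ≠ 0 := sub_ne_zero.2 hne
  have hdn : 0 < ‖x - x₀‖ := norm_pos_iff.2 hd
  set c : ℝ := ε / 2 / ‖x - x₀‖ with hc
  have hc0 : 0 < c := by positivity
  set q := p + c • (x - x₀) with hq
  have hqmem : q ∈ subdiff Ω u x₀ := by
    refine interior_subset (hball ?_)
    rw [mem_ball, dist_eq_norm, hq, add_sub_cancel_left, norm_smul, Real.norm_eq_abs,
      abs_of_pos hc0, hc]
    rw [div_mul_cancel₀ _ (ne_of_gt hdn)]
    linarith
  have h1 := hp x₀ hx₀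
  have h2 := hqmem x hx
  -- h1 : u x + ⟪p, x₀ - x⟫ ≤ u x₀ ; h2 : u x₀ + ⟪q, x - x₀⟫ ≤ u x
  have e1 : ⟪p, x₀ - x⟫ = -⟪p, x - x₀⟫ := by
    rw [← inner_neg_right, neg_sub]
  have e2 : ⟪q, x - x₀⟫ = ⟪p, x - x₀⟫ + c * ‖x - x₀‖ ^ 2 := by
    rw [hq, inner_add_left, real_inner_smul_left, real_inner_self_eq_norm_sq]
  nlinarith [mul_pos hc0 (pow_pos hdn 2)]

lemma ae_diff (hΩo : IsOpen Ω) (hconv : ∀ z ∈ Ω, (subdiff Ω u z).Nonempty) :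
    volume {x : E | x ∈ Ω ∧ ¬ DifferentiableAt ℝ u x} = 0 := by
  refine measure_null_of_locally_null _ fun z hz => ?_
  obtain ⟨r, hr0, hball⟩ := Metric.isOpen_iff.1 hΩo z hz.1
  have hcvx : ConvexOn ℝ (ball z r) u := convexOn_of_subdiff hconv hball (convex_ball _ _)
  have hLL := hcvx.locallyLipschitzOn isOpen_ball
  obtain ⟨K, t, ht, hlip⟩ := hLL (mem_ball_self hr0)
  rw [isOpen_ball.nhdsWithin_eq (mem_ball_self hr0)] at ht
  obtain ⟨ε, hε, hεt⟩ := Metric.mem_nhds_iff.1 ht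
  have hlip' : LipschitzOnWith K u (ball z ε) := hlip.mono hεt
  have had := hlip'.ae_differentiableWithinAt_of_mem (μ := volume)
  refine ⟨{x : E | x ∈ Ω ∧ ¬ DifferentiableAt ℝ u x} ∩ ball z ε,
    inter_mem_nhdsWithin _ (ball_mem_nhds z hε), ?_⟩
  refine measure_mono_null ?_ (ae_iff.1 had)
  rintro w ⟨⟨-, hwnd⟩, hwb⟩
  simp only [mem_setOf_eq, not_forall]
  refine ⟨hwb, fun hdw => hwnd (hdw.differentiableAt (isOpen_ball.mem_nhds hwb))⟩

/-- A local subgradient at an isolated singular point is a global subgradient. -/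
lemma mem_subdiff_of_local (hΩo : IsOpen Ω) (hconv : ∀ z ∈ Ω, (subdiff Ω u z).Nonempty)
    {ρ : ℝ} (hρ : 0 < ρ) (hball : closedBall x₀ ρ ⊆ Ω)
    (hdiff : ∀ z ∈ closedBall x₀ ρ, z ≠ x₀ → DifferentiableAt ℝ u z)
    (hcont : ContinuousAt u x₀)
    (hq : ∀ y ∈ closedBall x₀ ρ, u x₀ + ⟪q, y - x₀⟫ ≤ u y) : q ∈ subdiff Ω u x₀ := by
  intro y hyΩ
  rcases eq_or_ne y x₀ with rfl | hne
  · simp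
  · set w := y - x₀ with hw
    have hw0 : w ≠ 0 := sub_ne_zero.2 hne
    have hwn : 0 < ‖w‖ := norm_pos_iff.2 hw0
    set T : ℝ := min (ρ / ‖w‖) 1 with hT
    have hT0 : 0 < T := lt_min (by positivity) one_pos
    have hT1 : T ≤ 1 := min_le_right _ _
    have hmem : ∀ σ : ℝ, 0 ≤ σ → σ ≤ T → x₀ + σ • w ∈ closedBall x₀ ρ := by
      intro σ h0 h1
      rw [mem_closedBall, dist_eq_norm, add_sub_cancel_left, norm_smul, Real.norm_eq_abs,
        abs_of_nonneg h0]
      have : σ ≤ ρ / ‖w‖ := h1.trans (min_le_left _ _)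
      calc σ * ‖w‖ ≤ (ρ / ‖w‖) * ‖w‖ := by gcongr
        _ = ρ := by field_simp
    have step : ∀ t : ℝ, 0 < t → t ≤ T →
        ∃ σ, 0 < σ ∧ σ < t ∧ u (x₀ + σ • w) + (1 - σ) * ⟪q, w⟫ ≤ u y := by
      intro t ht0 htT
      set g : ℝ → ℝ := fun σ => u (x₀ + σ • w) with hg
      have hgc : ContinuousOn g (Icc 0 t) := by
        intro σ hσ
        have hline : Continuous fun σ : ℝ => x₀ + σ • w := by continuity
        rcases eq_or_ne σ 0 with rfl | hσ0
        · have hx0 : ContinuousAt u (x₀ + (0:ℝ) • w) := by simpa using hcont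
          have : ContinuousAt (fun σ : ℝ => u (x₀ + σ • w)) 0 :=
            ContinuousAt.comp hx0 hline.continuousAt
          exact this.continuousWithinAt
        · have hzne : x₀ + σ • w ≠ x₀ := by
            simp only [ne_eq, add_eq_left, smul_eq_zero, not_or]
            exact ⟨hσ0, hw0⟩
          have hd := hdiff _ (hmem σ hσ.1 (hσ.2.trans htT)) hzne
          have : ContinuousAt (fun σ' : ℝ => u (x₀ + σ' • w)) σ :=
            ContinuousAt.comp hd.continuousAt hline.continuousAt
          exact this.continuousWithinAt
      have hgd : ∀ σ ∈ Ioo 0 t, HasDerivAt g (⟪gradient u (x₀ + σ • w), w⟫) σ := by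
        intro σ hσ
        have hzne : x₀ + σ • w ≠ x₀ := by
          simp only [ne_eq, add_eq_left, smul_eq_zero, not_or]
          exact ⟨ne_of_gt hσ.1, hw0⟩
        have hd := hdiff _ (hmem σ hσ.1.le (hσ.2.le.trans htT)) hzne
        have hline : HasDerivAt (fun σ : ℝ => x₀ + σ • w) w σ := by
          simpa using ((hasDerivAt_id σ).smul_const w).const_add x₀
        have hcomp := hd.hasFDerivAt.comp_hasDerivAt σ hline
        have efd : fderiv ℝ u (x₀ + σ • w) w = ⟪gradient u (x₀ + σ • w), w⟫ := by
          have : fderiv ℝ u (x₀ + σ • w)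
              = InnerProductSpace.toDual ℝ E (gradient u (x₀ + σ • w)) := by
            rw [gradient, LinearIsometryEquiv.apply_symm_apply]
          rw [this, InnerProductSpace.toDual_apply_apply]
        exact efd ▸ hcomp
      obtain ⟨σ, hσIoo, hσeq⟩ := exists_hasDerivAt_eq_slope g _ ht0 hgc hgd
      have hg0 : g 0 = u x₀ := by simp [hg]
      have hslope : ⟪q, w⟫ ≤ (g t - g 0) / (t - 0) := by
        have h1 := hq (x₀ + t • w) (hmem t ht0.le htT)
        rw [add_sub_cancel_left, real_inner_smul_right] at h1
        rw [hg0, sub_zero, le_div_iff₀ ht0]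
        have : g t = u (x₀ + t • w) := rfl
        linarith [h1, this ▸ h1]
      refine ⟨σ, hσIoo.1, hσIoo.2, ?_⟩
      set z := x₀ + σ • w with hz
      have hzΩ : z ∈ Ω := hball (hmem σ hσIoo.1.le (hσIoo.2.le.trans htT))
      have hzne : z ≠ x₀ := by
        simp only [hz, ne_eq, add_eq_left, smul_eq_zero, not_or]
        exact ⟨ne_of_gt hσIoo.1, hw0⟩
      have hzd := hdiff _ (hmem σ hσIoo.1.le (hσIoo.2.le.trans htT)) hzne
      have hgz := gradient_mem_subdiff hconv hΩo hzΩ hzd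
      have hgzy := hgz y hyΩ
      have hyz : y - z = (1 - σ) • w := by
        simp only [hz, hw]; module
      rw [hyz, real_inner_smul_right] at hgzy
      have h1σ : 0 ≤ 1 - σ := by
        have : σ < 1 := lt_of_lt_of_le hσIoo.2 (htT.trans hT1)
        linarith
      have hmul : (1 - σ) * ⟪q, w⟫ ≤ (1 - σ) * ⟪gradient u z, w⟫ := by
        apply mul_le_mul_of_nonneg_left _ h1σ
        rw [hσeq]; exact hslope
      linarith
    -- now take limits along t = T/(k+1)
    have hstep' : ∀ k : ℕ, ∃ σ, 0 < σ ∧ σ < T / (k + 1) ∧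
        u (x₀ + σ • w) + (1 - σ) * ⟪q, w⟫ ≤ u y := by
      intro k
      refine step (T / (k + 1)) (by positivity) ?_
      apply div_le_self hT0.le
      have : (1:ℝ) ≤ (k:ℝ) + 1 := by exact_mod_cast Nat.succ_le_succ (Nat.zero_le k)
      linarith
    choose σs hσ1 hσ2 hσ3 using hstep'
    have hdiv : Filter.Tendsto (fun k : ℕ => T / (k + 1)) Filter.atTop (nhds 0) := by
      have h1 := tendsto_one_div_add_atTop_nhds_zero_nat.const_mul T
      rw [mul_zero] at h1
      refine h1.congr fun k => ?_
      field_simp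
    have hσ0 : Filter.Tendsto σs Filter.atTop (nhds 0) := by
      exact squeeze_zero (fun k => (hσ1 k).le) (fun k => (hσ2 k).le) hdiv
    have hξ : Filter.Tendsto (fun k => x₀ + σs k • w) Filter.atTop (nhds x₀) := by
      have h1 : Filter.Tendsto (fun k => σs k • w) Filter.atTop (nhds ((0:ℝ) • w)) :=
        hσ0.smul_const w
      rw [zero_smul] at h1
      have h2 := (tendsto_const_nhds (x := x₀) (f := Filter.atTop (α := ℕ))).add h1
      rwa [add_zero] at h2
    have hlim : Filter.Tendsto (fun k => u (x₀ + σs k • w) + (1 - σs k) * ⟪q, w⟫)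
        Filter.atTop (nhds (u x₀ + ⟪q, w⟫)) := by
      have h1 : Filter.Tendsto (fun k => u (x₀ + σs k • w)) Filter.atTop (nhds (u x₀)) :=
        hcont.tendsto.comp hξ
      have h2 : Filter.Tendsto (fun k => (1 - σs k) * ⟪q, w⟫) Filter.atTop (nhds ⟪q, w⟫) := by
        have := ((tendsto_const_nhds (x := (1:ℝ)) (f := Filter.atTop (α := ℕ))).sub
          hσ0).mul_const ⟪q, w⟫
        rwa [sub_zero, one_mul] at this
      exact h1.add h2
    exact le_of_tendsto hlim (Filter.Eventually.of_forall fun k => hσ3 k)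
end BrenierHole

open BrenierHole

/-- At an isolated singular point in the interior of `spt μ` whose subdifferential has
nonempty interior, the interior of the subdifferential is a hole in `spt ν`. -/
theorem interior_subdiff_isHole_of_isolated_singularity
    (n : ℕ) (hn : 1 ≤ n)
    (Ω : Set (EuclideanSpace ℝ (Fin n)))
    (hΩo : IsOpen Ω) (hΩb : Bornology.IsBounded Ω)
    (μ ν : Measure (EuclideanSpace ℝ (Fin n)))
    (hμp : IsProbabilityMeasure μ) (hνp : IsProbabilityMeasure ν)
    (hμac : μ ≪ volume) (hνac : ν ≪ volume)
    (hμs : msupport μ ⊆ Ω)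
    (u : EuclideanSpace ℝ (Fin n) → ℝ) (hu : IsBrenierSol Ω μ ν u)
    (x₀ : EuclideanSpace ℝ (Fin n)) (hx₀ : x₀ ∈ interior (msupport μ))
    (hsing : IsIsolatedSingPt Ω u x₀)
    (hfull : (interior (subdiff Ω u x₀)).Nonempty) :
    IsHole (msupport ν) (interior (subdiff Ω u x₀)) := by
  obtain ⟨hx₀Ω, hx₀nd, N, hNΩ, hNo, hx₀N, hNdiff⟩ := hsing
  set K := subdiff Ω u x₀ with hKdef
  set O := interior K with hOdef
  have hKconv : Convex ℝ K := convex_subdiff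
  have hKclosed : IsClosed K := isClosed_subdiff
  have hOo : IsOpen O := isOpen_interior
  have hOconv : Convex ℝ O := hKconv.interior
  have hOK : O ⊆ K := interior_subset
  -- choose a radius
  have hnhds : N ∩ interior (msupport μ) ∈ nhds x₀ :=
    Filter.inter_mem (hNo.mem_nhds hx₀N) (isOpen_interior.mem_nhds hx₀)
  obtain ⟨R, hR0, hRsub⟩ := Metric.mem_nhds_iff.1 hnhds
  set ρ := R / 4 with hρdef
  have hρ0 : 0 < ρ := by positivity
  have hball3 : closedBall x₀ (3 * ρ) ⊆ N ∩ interior (msupport μ) := by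
    refine subset_trans (closedBall_subset_ball ?_) hRsub
    rw [hρdef]; linarith
  have hballN : closedBall x₀ (3 * ρ) ⊆ N := hball3.trans inter_subset_left
  have hballsptμ : closedBall x₀ (3 * ρ) ⊆ msupport μ :=
    (hball3.trans inter_subset_right).trans interior_subset
  have hballΩ : closedBall x₀ (3 * ρ) ⊆ Ω := hballN.trans hNΩ
  have hdiff : ∀ z ∈ closedBall x₀ (3 * ρ), z ≠ x₀ → DifferentiableAt ℝ u z :=
    fun z hz hne => hNdiff z ⟨hballN hz, hne⟩
  have hball1 : closedBall x₀ ρ ⊆ closedBall x₀ (3 * ρ) :=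
    closedBall_subset_closedBall (by linarith)
  have hball2 : closedBall x₀ (2 * ρ) ⊆ closedBall x₀ (3 * ρ) :=
    closedBall_subset_closedBall (by linarith)
  -- continuity
  have hcvxball : ConvexOn ℝ (ball x₀ (3 * ρ)) u :=
    convexOn_of_subdiff hu.convex (ball_subset_closedBall.trans hballΩ) (convex_ball _ _)
  have hcontx₀ : ContinuousAt u x₀ :=
    (hcvxball.continuousOn isOpen_ball).continuousAt
      (isOpen_ball.mem_nhds (mem_ball_self (by positivity)))
  have hcont2 : ContinuousOn u (closedBall x₀ (2 * ρ)) := by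
    intro z hz
    rcases eq_or_ne z x₀ with rfl | hne
    · exact hcontx₀.continuousWithinAt
    · exact ((hdiff z (hball2 hz) hne).continuousAt).continuousWithinAt
  -- nontriviality
  haveI : Nontrivial (EuclideanSpace ℝ (Fin n)) := by
    have hlt : 0 < n := hn
    refine ⟨⟨EuclideanSpace.single ⟨0, hlt⟩ (1:ℝ), 0, fun h => ?_⟩⟩
    have := congrArg (fun f : EuclideanSpace ℝ (Fin n) => f ⟨0, hlt⟩) h
    simp [EuclideanSpace.single_apply] at this
  -- boundedness of K
  obtain ⟨yM, hyM, hyMmax⟩ := (isCompact_sphere x₀ (2 * ρ)).exists_isMaxOn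
    (NormedSpace.sphere_nonempty.2 (by positivity))
    (hcont2.mono sphere_subset_closedBall)
  have hKbdd : Bornology.IsBounded K := by
    rw [isBounded_iff_forall_norm_le]
    refine ⟨max 0 ((u yM - u x₀) / (2 * ρ)), fun p hp => ?_⟩
    rcases eq_or_ne p 0 with rfl | hp0
    · simp
    · have hpn : 0 < ‖p‖ := norm_pos_iff.2 hp0
      set y := x₀ + ((2 * ρ) / ‖p‖) • p with hy
      have hysph : y ∈ sphere x₀ (2 * ρ) := by
        rw [mem_sphere, dist_eq_norm, hy, add_sub_cancel_left, norm_smul, Real.norm_eq_abs,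
          abs_of_pos (by positivity), div_mul_cancel₀ _ (ne_of_gt hpn)]
      have hyΩ : y ∈ Ω := hballΩ (hball2 (sphere_subset_closedBall hysph))
      have h1 := hp y hyΩ
      rw [hy, add_sub_cancel_left, real_inner_smul_right, real_inner_self_eq_norm_sq] at h1
      have h2 : u y ≤ u yM := hyMmax hysph
      have : (2 * ρ) / ‖p‖ * ‖p‖ ^ 2 = 2 * ρ * ‖p‖ := by field_simp
      rw [this] at h1
      have : ‖p‖ ≤ (u yM - u x₀) / (2 * ρ) := by
        rw [le_div_iff₀ (by positivity)]; nlinarith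
      exact this.trans (le_max_right _ _)
  have hObdd : Bornology.IsBounded O := hKbdd.subset hOK
  -- gradient is measurable
  have hgmeas : Measurable (fun x : EuclideanSpace ℝ (Fin n) => gradient u x) := by
    have heq : (fun x : EuclideanSpace ℝ (Fin n) => gradient u x)
        = (fun L => (InnerProductSpace.toDual ℝ (EuclideanSpace ℝ (Fin n))).symm L)
          ∘ (fderiv ℝ u) := rfl
    rw [heq]
    exact ((InnerProductSpace.toDual ℝ _).symm.continuous.measurable).comp
      (measurable_fderiv ℝ u)
  -- ν O = 0
  have hνO : ν O = 0 := by
    have hmap : ν O = μ ((fun x => gradient u x) ⁻¹' O) := by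
      rw [← hu.map_grad, Measure.map_apply hgmeas hOo.measurableSet]
    rw [hmap]
    have hsub : (fun x => gradient u x) ⁻¹' O
        ⊆ (msupport μ)ᶜ ∪ {x | x ∈ Ω ∧ ¬ DifferentiableAt ℝ u x} := by
      intro x hx
      by_cases hxs : x ∈ msupport μ
      · right
        refine ⟨hμs hxs, fun hdx => ?_⟩
        have hgx := gradient_mem_subdiff hu.convex hΩo (hμs hxs) hdx
        have hxeq := eq_of_gradient_mem_interior (hμs hxs) hx₀Ω hgx hx
        exact hx₀nd (hxeq ▸ hdx)
      · exact Or.inl hxs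
    exact measure_mono_null hsub
      (measure_union_null (msupport_compl_null μ) (hμac (ae_diff hΩo hu.convex)))
  have hOspt : ∀ z, z ∈ O → z ∉ msupport ν := fun z hzO hzs => hzs O hOo hzO hνO
  -- MAIN frontier claim
  have hfrontier : ∀ p ∈ frontier O, p ∈ msupport ν := by
    intro p hp
    have hpO : p ∉ O := by
      have h2 := hp.2
      rwa [hOdef, interior_interior] at h2
    have hpK : p ∈ K := closure_minimal hOK hKclosed hp.1
    -- supporting functional
    obtain ⟨f, hf⟩ := geometric_hahn_banach_open_point hOconv hOo hpO
    set v := (InnerProductSpace.toDual ℝ (EuclideanSpace ℝ (Fin n))).symm f with hvdef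
    have hvapp : ∀ z, ⟪v, z⟫ = f z := fun z => InnerProductSpace.toDual_symm_apply
    obtain ⟨c, hc⟩ := hfull
    have hvne : v ≠ 0 := by
      intro h
      have h1 := hf c hc
      rw [← hvapp c, ← hvapp p, h, inner_zero_left, inner_zero_left] at h1
      exact lt_irrefl _ h1
    have hvn : 0 < ‖v‖ := norm_pos_iff.2 hvne
    have hfK : ∀ k ∈ K, f k ≤ f p := by
      intro k hk
      have harg : Filter.Tendsto (fun m : ℕ => k + (1 / ((m:ℝ) + 1)) • (c - k))
          Filter.atTop (nhds k) := by
        have h1 := (tendsto_one_div_add_atTop_nhds_zero_nat (𝕜 := ℝ)).smul_const (c - k)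
        rw [zero_smul] at h1
        have h2 := (tendsto_const_nhds (x := k) (f := Filter.atTop (α := ℕ))).add h1
        rwa [add_zero] at h2
      refine le_of_tendsto ((f.continuous.tendsto k).comp harg)
        (Filter.Eventually.of_forall fun m => ?_)
      refine (hf _ ?_).le
      refine hKconv.add_smul_sub_mem_interior hk hc ⟨by positivity, ?_⟩
      rw [div_le_one (by positivity)]
      linarith [Nat.cast_nonneg (α := ℝ) m]
    by_cases hcase : ∃ z, z ∈ closedBall x₀ ρ ∧ z ≠ x₀ ∧ u z = u x₀ + ⟪p, z - x₀⟫
    · -- contact case : p is attained as a gradient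
      obtain ⟨z, hz, hzne, hzeq⟩ := hcase
      set m := x₀ + (1 / 2 : ℝ) • (z - x₀) with hmdef
      have hmz : m - x₀ = (1 / 2 : ℝ) • (z - x₀) := by rw [hmdef, add_sub_cancel_left]
      have hmball : m ∈ closedBall x₀ ρ := by
        rw [mem_closedBall, dist_eq_norm, hmz, norm_smul]
        rw [mem_closedBall, dist_eq_norm] at hz
        have : ‖(1/2 : ℝ)‖ = 1/2 := by norm_num
        rw [this]
        linarith
      have hmne : m ≠ x₀ := by
        intro h
        apply hzne
        have : (1 / 2 : ℝ) • (z - x₀) = 0 := by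
          rw [← hmz, h, sub_self]
        have hz0 : z - x₀ = 0 := by
          rcases smul_eq_zero.1 this with h' | h'
          · norm_num at h'
          · exact h'
        rw [← sub_eq_zero]; exact hz0
      have hmΩ : m ∈ Ω := hballΩ (hball1 hmball)
      have hzΩ : z ∈ Ω := hballΩ (hball1 hz)
      obtain ⟨qm, hqm⟩ := hu.convex m hmΩ
      have h1 := hqm x₀ hx₀Ω
      have h2 := hqm z hzΩ
      have hxm : x₀ - m = -(z - m) := by rw [hmdef]; module
      rw [hxm, inner_neg_right] at h1
      have hum_le : u m ≤ (u x₀ + u z) / 2 := by linarith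
      have hinner_m : ⟪p, m - x₀⟫ = (1 / 2) * ⟪p, z - x₀⟫ := by
        rw [hmz, real_inner_smul_right]
      have hge : u x₀ + ⟪p, m - x₀⟫ ≤ u m := hpK m hmΩ
      have hueq : u m = u x₀ + ⟪p, m - x₀⟫ := by
        rw [hinner_m]
        rw [hinner_m] at hge
        linarith
      have hpm : p ∈ subdiff Ω u m := by
        intro y hy
        have h3 := hpK y hy
        have h4 : ⟪p, m - x₀⟫ + ⟪p, y - m⟫ = ⟪p, y - x₀⟫ := by
          rw [← inner_add_right]
          congr 1
          abel
        rw [hueq]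
        linarith
      have hdm : DifferentiableAt ℝ u m := hdiff m (hball1 hmball) hmne
      have hpg : p = gradient u m := eq_gradient_of_mem_subdiff hΩo hmΩ hdm hpm
      rw [hpg]
      exact hu.grad_mem_support m (hballsptμ (hball1 hmball)) hdm
    · -- gap case
      push_neg at hcase
      have hsphsub : sphere x₀ ρ ⊆ closedBall x₀ (2 * ρ) :=
        sphere_subset_closedBall.trans (closedBall_subset_closedBall (by linarith))
      have hsphne : ∀ z ∈ sphere x₀ ρ, z ≠ x₀ := by
        intro z hz h
        rw [h, mem_sphere, dist_self] at hz
        exact hρ0.ne' hz.symm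
      obtain ⟨δ, hδ0, hδmin⟩ : ∃ δ : ℝ, 0 < δ ∧
          ∀ z ∈ sphere x₀ ρ, u x₀ + ⟪p, z - x₀⟫ + δ ≤ u z := by
        have hgc : ContinuousOn (fun z => u z - (u x₀ + ⟪p, z - x₀⟫)) (sphere x₀ ρ) := by
          refine (hcont2.mono hsphsub).sub ?_
          exact (continuous_const.add
            (continuous_const.inner (continuous_id.sub continuous_const))).continuousOn
        obtain ⟨y₀, hy₀, hy₀min⟩ := (isCompact_sphere x₀ ρ).exists_isMinOn
          (NormedSpace.sphere_nonempty.2 hρ0.le) hgc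
        refine ⟨u y₀ - (u x₀ + ⟪p, y₀ - x₀⟫), ?_, ?_⟩
        · have h1 : u x₀ + ⟪p, y₀ - x₀⟫ ≤ u y₀ :=
            hpK y₀ (hballΩ (hball1 (sphere_subset_closedBall hy₀)))
          have h2 : u y₀ ≠ u x₀ + ⟪p, y₀ - x₀⟫ :=
            hcase y₀ (sphere_subset_closedBall hy₀) (hsphne y₀ hy₀)
          have := lt_of_le_of_ne h1 (Ne.symm h2)
          linarith
        · intro z hz
          have := hy₀min hz
          simp only [mem_setOf_eq] at this
          linarith
      -- show p ∈ closure (msupport ν)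
      have hclosure : p ∈ closure (msupport ν) := by
        rw [Metric.mem_closure_iff]
        intro ε hε
        obtain ⟨s, hs0, hs1, hs2⟩ : ∃ s : ℝ, 0 < s ∧ s * (‖v‖ * ρ) ≤ δ / 2 ∧ s * ‖v‖ ≤ ε / 2 := by
          refine ⟨min (δ / (2 * ρ * ‖v‖)) (ε / (2 * ‖v‖)), lt_min (by positivity) (by positivity),
            ?_, ?_⟩
          · have h1 : min (δ / (2 * ρ * ‖v‖)) (ε / (2 * ‖v‖)) ≤ δ / (2 * ρ * ‖v‖) :=
              min_le_left _ _
            have h2 : (δ / (2 * ρ * ‖v‖)) * (‖v‖ * ρ) = δ / 2 := by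
              field_simp
            calc min (δ / (2 * ρ * ‖v‖)) (ε / (2 * ‖v‖)) * (‖v‖ * ρ)
                ≤ (δ / (2 * ρ * ‖v‖)) * (‖v‖ * ρ) :=
                  mul_le_mul_of_nonneg_right h1 (by positivity)
              _ = δ / 2 := h2
          · have h1 : min (δ / (2 * ρ * ‖v‖)) (ε / (2 * ‖v‖)) ≤ ε / (2 * ‖v‖) :=
              min_le_right _ _
            have h2 : (ε / (2 * ‖v‖)) * ‖v‖ = ε / 2 := by field_simp
            calc min (δ / (2 * ρ * ‖v‖)) (ε / (2 * ‖v‖)) * ‖v‖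
                ≤ (ε / (2 * ‖v‖)) * ‖v‖ := mul_le_mul_of_nonneg_right h1 hvn.le
              _ = ε / 2 := h2
        obtain ⟨xs, hxs, hxsmin⟩ : ∃ xs ∈ closedBall x₀ ρ,
            ∀ y ∈ closedBall x₀ ρ, u xs - ⟪p + s • v, xs⟫ ≤ u y - ⟪p + s • v, y⟫ := by
          have hφc : ContinuousOn (fun y => u y - ⟪p + s • v, y⟫) (closedBall x₀ ρ) := by
            refine (hcont2.mono (closedBall_subset_closedBall (by linarith))).sub ?_
            exact (continuous_const.inner continuous_id).continuousOn
          obtain ⟨xs, hxs, hxsmin⟩ := (isCompact_closedBall x₀ ρ).exists_isMinOn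
            ⟨x₀, mem_closedBall_self hρ0.le⟩ hφc
          exact ⟨xs, hxs, fun y hy => hxsmin hy⟩
        have hbd : ∀ z ∈ sphere x₀ ρ,
            u x₀ - ⟪p + s • v, x₀⟫ < u z - ⟪p + s • v, z⟫ := by
          intro z hz
          have hδz := hδmin z hz
          have hCS : ⟪v, z - x₀⟫ ≤ ‖v‖ * ρ := by
            have h1 := real_inner_le_norm v (z - x₀)
            rw [mem_sphere, dist_eq_norm] at hz
            rw [hz] at h1
            exact h1
          have hsvz : s * ⟪v, z - x₀⟫ ≤ δ / 2 :=
            (mul_le_mul_of_nonneg_left hCS hs0.le).trans hs1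
          have he1 : ⟪p + s • v, z⟫ - ⟪p + s • v, x₀⟫
              = ⟪p, z - x₀⟫ + s * ⟪v, z - x₀⟫ := by
            rw [← inner_sub_right, inner_add_left, real_inner_smul_left]
          linarith
        have hxsball : xs ∈ ball x₀ ρ := by
          rw [mem_closedBall] at hxs
          rcases lt_or_eq_of_le hxs with h | h
          · exact mem_ball.2 h
          · exfalso
            have h1 := hbd xs (mem_sphere.2 h)
            have h2 := hxsmin x₀ (mem_closedBall_self hρ0.le)
            exact absurd h2 (not_le.2 h1)
        by_cases hxsx₀ : xs = x₀
        · exfalso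
          have hloc : ∀ y ∈ closedBall x₀ ρ, u x₀ + ⟪p + s • v, y - x₀⟫ ≤ u y := by
            intro y hy
            have h1 := hxsmin y hy
            rw [hxsx₀] at h1
            have h2 : ⟪p + s • v, y - x₀⟫ = ⟪p + s • v, y⟫ - ⟪p + s • v, x₀⟫ :=
              inner_sub_right _ _ _
            linarith
          have hp'K : p + s • v ∈ K :=
            mem_subdiff_of_local hΩo hu.convex hρ0 (hball1.trans hballΩ)
              (fun z hz => hdiff z (hball1 hz)) hcontx₀ hloc
          have h1 := hfK _ hp'K
          have h2 : f (p + s • v) = f p + s * ‖v‖ ^ 2 := by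
            rw [f.map_add, f.map_smul, smul_eq_mul, ← hvapp v, real_inner_self_eq_norm_sq]
          nlinarith [mul_pos hs0 (pow_pos hvn 2)]
        · have hdxs : DifferentiableAt ℝ u xs := hdiff xs (hball1 hxs) hxsx₀
          have hmin : IsLocalMin (fun y => u y - ⟪p + s • v, y⟫) xs := by
            have hnb : closedBall x₀ ρ ∈ nhds xs :=
              Filter.mem_of_superset (isOpen_ball.mem_nhds hxsball) ball_subset_closedBall
            filter_upwards [hnb] with y hy using hxsmin y hy
          have hip' : HasFDerivAt (fun y : EuclideanSpace ℝ (Fin n) => ⟪p + s • v, y⟫)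
              (innerSL ℝ (p + s • v)) xs := (innerSL ℝ (p + s • v)).hasFDerivAt
          have hF : HasFDerivAt (fun y => u y - ⟪p + s • v, y⟫)
              (fderiv ℝ u xs - innerSL ℝ (p + s • v)) xs :=
            hdxs.hasFDerivAt.sub hip'
          have h0 := hmin.hasFDerivAt_eq_zero hF
          rw [sub_eq_zero] at h0
          have e2 : innerSL ℝ (p + s • v)
              = InnerProductSpace.toDual ℝ (EuclideanSpace ℝ (Fin n)) (p + s • v) := by
            ext y
            simp [InnerProductSpace.toDual_apply_apply]
          have hgrad : gradient u xs = p + s • v := by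
            rw [gradient, h0, e2, LinearIsometryEquiv.symm_apply_apply]
          refine ⟨gradient u xs,
            hu.grad_mem_support xs (hballsptμ (hball1 hxs)) hdxs, ?_⟩
          rw [hgrad, dist_self_add_right, norm_smul, Real.norm_eq_abs, abs_of_pos hs0]
          linarith
      exact (isClosed_msupport ν).closure_subset hclosure

  refine ⟨hfull, hOo, ⟨hfull, hOconv.isPreconnected⟩, hObdd, ?_, ?_⟩
  · rw [eq_empty_iff_forall_notMem]
    rintro z ⟨hzO, hzint⟩
    exact hOspt z hzO (interior_subset hzint)
  · intro p hp
    refine ⟨subset_closure (hfrontier p hp), fun hpint => ?_⟩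
    obtain ⟨z, hz1, hz2⟩ := (_root_.mem_closure_iff.1 hp.1) _ isOpen_interior hpint
    exact hOspt z hz2 (interior_subset hz1)
end
end

section
/- Let n ≥ 1, let Ω ⊆ ℝⁿ be open and convex, let u : Ω → ℝ be convex, and let x₀ ∈ Ω be an isolated singular point of u. If p₀ ∈ ∂u(x₀) is not an extreme point of the convex set ∂u(x₀), then the contact set {x ∈ Ω : u(x) = u(x₀) + ⟨p₀, x − x₀⟩} consists of the single point x₀. -/
open MeasureTheory Set Metric RealInnerProductSpace

noncomputable section

lemma subdiff_fderiv_eq {n : ℕ} {Ω : Set (EuclideanSpace ℝ (Fin n))} (hΩo : IsOpen Ω)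
    {u : EuclideanSpace ℝ (Fin n) → ℝ} {y p : EuclideanSpace ℝ (Fin n)}
    (hy : y ∈ Ω) (hp : ∀ z ∈ Ω, u y + ⟪p, z - y⟫ ≤ u z)
    (hd : DifferentiableAt ℝ u y) :
    fderiv ℝ u y = innerSL ℝ p := by
  set g : EuclideanSpace ℝ (Fin n) → ℝ := fun z => u z - ⟪p, z⟫ with hg
  have hgd : DifferentiableAt ℝ g y := hd.sub ((innerSL ℝ p).differentiableAt)
  have hmin : IsLocalMin g y := by
    filter_upwards [hΩo.mem_nhds hy] with z hz
    have := hp z hz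
    simp only [hg, inner_sub_right] at this ⊢
    linarith
  have h0 : fderiv ℝ g y = 0 := hmin.fderiv_eq_zero
  have h1 : fderiv ℝ (fun z : EuclideanSpace ℝ (Fin n) => ⟪p, z⟫) y = innerSL ℝ p :=
    (innerSL ℝ p).fderiv
  have hdi : DifferentiableAt ℝ (fun z : EuclideanSpace ℝ (Fin n) => ⟪p, z⟫) y :=
    (innerSL ℝ p).differentiableAt
  have hsub := fderiv_fun_sub hd hdi
  rw [h1] at hsub
  rw [hg] at h0
  rw [hsub] at h0
  exact sub_eq_zero.mp h0

lemma subdiff_unique {n : ℕ} {Ω : Set (EuclideanSpace ℝ (Fin n))} (hΩo : IsOpen Ω)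
    {u : EuclideanSpace ℝ (Fin n) → ℝ} {y p q : EuclideanSpace ℝ (Fin n)}
    (hy : y ∈ Ω) (hp : ∀ z ∈ Ω, u y + ⟪p, z - y⟫ ≤ u z)
    (hq : ∀ z ∈ Ω, u y + ⟪q, z - y⟫ ≤ u z)
    (hd : DifferentiableAt ℝ u y) : p = q := by
  have h := (subdiff_fderiv_eq hΩo hy hp hd).symm.trans (subdiff_fderiv_eq hΩo hy hq hd)
  have h2 : ⟪p - q, p - q⟫ = 0 := by
    have := congrArg (fun f : EuclideanSpace ℝ (Fin n) →L[ℝ] ℝ => f (p - q)) h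
    simp only [innerSL_apply_apply] at this
    rw [inner_sub_left, this]
    ring
  exact sub_eq_zero.mp (inner_self_eq_zero.mp h2)

private theorem contact_aux
    (n : ℕ) (hn : 1 ≤ n)
    (Ω : Set (EuclideanSpace ℝ (Fin n))) (hΩo : IsOpen Ω) (hΩc : Convex ℝ Ω)
    (u : EuclideanSpace ℝ (Fin n) → ℝ) (hu : ConvexOn ℝ Ω u)
    (x₀ : EuclideanSpace ℝ (Fin n)) (hsing :
      x₀ ∈ Ω ∧ ¬ DifferentiableAt ℝ u x₀ ∧
      ∃ N : Set (EuclideanSpace ℝ (Fin n)), N ⊆ Ω ∧ IsOpen N ∧ x₀ ∈ N ∧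
        ∀ x ∈ N \ {x₀}, DifferentiableAt ℝ u x)
    (p₀ : EuclideanSpace ℝ (Fin n))
    (hp₀ : ∀ y ∈ Ω, u x₀ + ⟪p₀, y - x₀⟫ ≤ u y)
    (hnex : p₀ ∉ ({p | ∀ y ∈ Ω, u x₀ + ⟪p, y - x₀⟫ ≤ u y} : Set _).extremePoints ℝ) :
    {x ∈ Ω | u x = u x₀ + ⟪p₀, x - x₀⟫} = {x₀} := by
  obtain ⟨hx₀Ω, hns, N, hNΩ, hNo, hx₀N, hNd⟩ := hsing
  -- extract p₁, p₂ from non-extremality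
  rw [mem_extremePoints] at hnex
  push_neg at hnex
  obtain ⟨p₁, hp₁, p₂, hp₂, hseg, hne⟩ := hnex hp₀
  obtain ⟨a, b, ha, hb, hab, habp⟩ := hseg
  ext x
  simp only [Set.mem_setOf_eq, Set.mem_singleton_iff]
  constructor
  · rintro ⟨hxΩ, hxc⟩
    by_contra hxne
    set d : EuclideanSpace ℝ (Fin n) := x - x₀ with hd
    have hd0 : d ≠ 0 := sub_ne_zero.mpr hxne
    have hdn : 0 < ‖d‖ := norm_pos_iff.mpr hd0
    obtain ⟨ε, hε, hball⟩ := Metric.isOpen_iff.mp hNo x₀ hx₀N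
    set s : ℝ := min (1/2) (ε / (2 * ‖d‖)) with hs
    have hs0 : 0 < s := lt_min (by norm_num) (by positivity)
    have hs1 : s ≤ 1/2 := min_le_left _ _
    set y : EuclideanSpace ℝ (Fin n) := x₀ + s • d with hy
    have hyN : y ∈ N := by
      apply hball
      have : ‖y - x₀‖ = s * ‖d‖ := by
        simp [hy, norm_smul, abs_of_pos hs0]
      rw [Metric.mem_ball, dist_eq_norm, this]
      calc s * ‖d‖ ≤ (ε / (2 * ‖d‖)) * ‖d‖ := by
            apply mul_le_mul_of_nonneg_right (min_le_right _ _) hdn.le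
        _ = ε / 2 := by field_simp
        _ < ε := by linarith
    have hyΩ : y ∈ Ω := hNΩ hyN
    have hyx₀ : y ≠ x₀ := by
      simp only [hy, ne_eq, add_eq_left]
      exact fun h => hd0 (by simpa [smul_eq_zero, hs0.ne'] using h)
    have hdiff : DifferentiableAt ℝ u y := hNd y ⟨hyN, hyx₀⟩
    -- value of u at y
    have hyconv : y = (1 - s) • x₀ + s • x := by
      simp only [hy, hd]
      module
    have c₀ := (⟪p₀, d⟫ : ℝ)
    have hle : u y ≤ u x₀ + s * ⟪p₀, d⟫ := by
      rw [hyconv]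
      calc u ((1-s) • x₀ + s • x) ≤ (1-s) * u x₀ + s * u x :=
            hu.2 hx₀Ω hxΩ (by linarith) hs0.le (by ring)
        _ = u x₀ + s * ⟪p₀, d⟫ := by rw [hxc]; ring
    have hge : u x₀ + s * ⟪p₀, d⟫ ≤ u y := by
      have := hp₀ y hyΩ
      have hyx : y - x₀ = s • d := by simp [hy]
      rwa [hyx, real_inner_smul_right] at this
    have huy : u y = u x₀ + s * ⟪p₀, d⟫ := le_antisymm hle hge
    -- inner products of p₁, p₂ with d all equal ⟪p₀, d⟫
    have hc1 : ⟪p₁, d⟫ ≤ ⟪p₀, d⟫ := by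
      have := hp₁ x hxΩ
      rw [hxc] at this; rw [hd]; linarith
    have hc2 : ⟪p₂, d⟫ ≤ ⟪p₀, d⟫ := by
      have := hp₂ x hxΩ
      rw [hxc] at this; rw [hd]; linarith
    have hcomb : a * ⟪p₁, d⟫ + b * ⟪p₂, d⟫ = ⟪p₀, d⟫ := by
      rw [← habp, inner_add_left, real_inner_smul_left, real_inner_smul_left]
    have hq1 : a * ⟪p₁, d⟫ ≤ a * ⟪p₀, d⟫ := mul_le_mul_of_nonneg_left hc1 ha.le
    have hq2 : b * ⟪p₂, d⟫ ≤ b * ⟪p₀, d⟫ := mul_le_mul_of_nonneg_left hc2 hb.le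
    have hsum : a * ⟪p₀, d⟫ + b * ⟪p₀, d⟫ = ⟪p₀, d⟫ := by rw [← add_mul, hab, one_mul]
    have hq1' : a * ⟪p₁, d⟫ = a * ⟪p₀, d⟫ := by linarith
    have hq2' : b * ⟪p₂, d⟫ = b * ⟪p₀, d⟫ := by linarith
    have hc1' : ⟪p₁, d⟫ = ⟪p₀, d⟫ := mul_left_cancel₀ ha.ne' hq1'
    have hc2' : ⟪p₂, d⟫ = ⟪p₀, d⟫ := mul_left_cancel₀ hb.ne' hq2'
    -- p₁ and p₂ are subgradients at y
    have hyx : y - x₀ = s • d := by simp [hy]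
    have hsub : ∀ p : EuclideanSpace ℝ (Fin n), (∀ z ∈ Ω, u x₀ + ⟪p, z - x₀⟫ ≤ u z) →
        ⟪p, d⟫ = ⟪p₀, d⟫ → ∀ z ∈ Ω, u y + ⟪p, z - y⟫ ≤ u z := by
      intro p hp hpd z hz
      have := hp z hz
      have hsplit : (z - x₀ : EuclideanSpace ℝ (Fin n)) = (z - y) + s • d := by
        rw [← hyx]; abel
      rw [hsplit, inner_add_right, real_inner_smul_right, hpd] at this
      rw [huy]; linarith
    have h1 := hsub p₁ hp₁ hc1'
    have h2 := hsub p₂ hp₂ hc2'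
    have he : p₁ = p₂ := subdiff_unique hΩo hyΩ h1 h2 hdiff
    have hp0e : p₁ = p₀ := by
      rw [← habp, ← he]
      rw [← add_smul, hab, one_smul]
    exact hne hp0e (he ▸ hp0e)
  · rintro rfl
    exact ⟨hx₀Ω, by simp⟩


/-- **Contact set of a non-extremal subgradient at an isolated singularity is a singleton.**
If `x₀` is an isolated singular point of a convex function `u` on an open convex set `Ω`
and `p₀ ∈ ∂u(x₀)` is not an extreme point of `∂u(x₀)`, then the contact set of the
corresponding supporting affine function is `{x₀}`. -/
theorem contact_set_singleton_of_nonextremal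
    (n : ℕ) (hn : 1 ≤ n)
    (Ω : Set (EuclideanSpace ℝ (Fin n))) (hΩo : IsOpen Ω) (hΩc : Convex ℝ Ω)
    (u : EuclideanSpace ℝ (Fin n) → ℝ) (hu : ConvexOn ℝ Ω u)
    (x₀ : EuclideanSpace ℝ (Fin n)) (hsing : IsIsolatedSingPt Ω u x₀)
    (p₀ : EuclideanSpace ℝ (Fin n)) (hp₀ : p₀ ∈ subdiff Ω u x₀)
    (hnex : p₀ ∉ (subdiff Ω u x₀).extremePoints ℝ) :
    {x ∈ Ω | u x = u x₀ + ⟪p₀, x - x₀⟫} = {x₀} :=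
  contact_aux n hn Ω hΩo hΩc u hu x₀ hsing p₀ hp₀ hnex
end
end

section
/- Let n ≥ 1, let Ω ⊆ ℝⁿ be open and convex, let u : Ω → ℝ be convex, and let x₀, x₁ ∈ Ω with x₁ ≠ x₀. Suppose p₊, p₋ ∈ ∂u(x₀) with p₊ ≠ p₋, set p₀ := (p₊ + p₋)/2, and assume u(x₁) = u(x₀) + ⟨p₀, x₁ − x₀⟩. Then for every λ ∈ [0,1], writing x(λ) := (1−λ)x₀ + λx₁, one has u(x(λ)) = u(x₀) + max{⟨p₊, x(λ) − x₀⟩, ⟨p₋, x(λ) − x₀⟩}, and all three of p₀, p₊, p₋ belong to ∂u(x(λ)); in particular, every point x(λ) of the segment from x₀ to x₁ is a singular point of u. -/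
open MeasureTheory Set Metric RealInnerProductSpace

noncomputable section

lemma subdiff_inner_le_fderiv {n : ℕ} {Ω : Set (EuclideanSpace ℝ (Fin n))}
    (hΩo : IsOpen Ω) {u : EuclideanSpace ℝ (Fin n) → ℝ} {x : EuclideanSpace ℝ (Fin n)}
    (hx : x ∈ Ω) {p : EuclideanSpace ℝ (Fin n)} (hp : p ∈ subdiff Ω u x)
    (hd : DifferentiableAt ℝ u x) (v : EuclideanSpace ℝ (Fin n)) :
    ⟪p, v⟫ ≤ fderiv ℝ u x v := by
  set g : ℝ → ℝ := fun t => u (x + t • v) with hg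
  have hline : HasDerivAt (fun t : ℝ => x + t • v) v 0 := by
    simpa using ((hasDerivAt_id (0:ℝ)).smul_const v).const_add x
  have hfd : HasFDerivAt u (fderiv ℝ u x) (x + (0:ℝ) • v) := by
    simpa using hd.hasFDerivAt
  have hgd : HasDerivAt g (fderiv ℝ u x v) 0 := by
    have := hfd.comp_hasDerivAt 0 hline
    exact this
  have hslope := hasDerivAt_iff_tendsto_slope.1 hgd
  have hslope' : Filter.Tendsto (slope g 0) (nhdsWithin 0 (Set.Ioi 0))
      (nhds (fderiv ℝ u x v)) :=
    hslope.mono_left (nhdsWithin_mono _ (fun t ht => ne_of_gt ht))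
  refine ge_of_tendsto hslope' ?_
  have hmem : ∀ᶠ t : ℝ in nhdsWithin 0 (Set.Ioi 0), x + t • v ∈ Ω := by
    apply Filter.Eventually.filter_mono nhdsWithin_le_nhds
    have hc : ContinuousAt (fun t : ℝ => x + t • v) 0 := by fun_prop
    have h0 : x + (0:ℝ) • v ∈ Ω := by simpa using hx
    exact hc.eventually_mem (hΩo.mem_nhds h0)
  filter_upwards [hmem, self_mem_nhdsWithin] with t htΩ ht
  have ht0 : (0:ℝ) < t := ht
  have hineq := hp _ htΩ
  have hinner : ⟪p, (x + t • v) - x⟫ = t * ⟪p, v⟫ := by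
    rw [show x + t • v - x = t • v by abel, real_inner_smul_right]
  rw [hinner] at hineq
  have hg0 : g 0 = u x := by simp [g]
  have hgt : g 0 + t * ⟪p, v⟫ ≤ g t := by simpa [g, hg0] using hineq
  rw [slope_def_field, sub_zero, le_div_iff₀ ht0]
  nlinarith [hgt]

/-- **Propagation of singularities along a segment.** If `pPlus ≠ pMinus` are subgradients of a
convex function `u` at `x₀`, `p₀ = (pPlus + pMinus)/2`, and the supporting affine function with
slope `p₀` touches `u` at some `x₁ ≠ x₀`, then along the whole segment from `x₀` to `x₁`
the function `u` equals `u(x₀) + max{⟨pPlus, ⋅ - x₀⟩, ⟨pMinus, ⋅ - x₀⟩}`, all of `p₀, pPlus, pMinus`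
remain subgradients, and every point of the segment is a singular point of `u`. -/
theorem singularity_propagates_along_segment
    (n : ℕ) (hn : 1 ≤ n)
    (Ω : Set (EuclideanSpace ℝ (Fin n))) (hΩo : IsOpen Ω) (hΩc : Convex ℝ Ω)
    (u : EuclideanSpace ℝ (Fin n) → ℝ) (hu : ConvexOn ℝ Ω u)
    (x₀ x₁ : EuclideanSpace ℝ (Fin n)) (hx₀ : x₀ ∈ Ω) (hx₁ : x₁ ∈ Ω) (hne : x₁ ≠ x₀)
    (pPlus pMinus : EuclideanSpace ℝ (Fin n)) (hpPlus : pPlus ∈ subdiff Ω u x₀)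
    (hpMinus : pMinus ∈ subdiff Ω u x₀) (hpne : pPlus ≠ pMinus)
    (p₀ : EuclideanSpace ℝ (Fin n)) (hp₀ : p₀ = (2:ℝ)⁻¹ • (pPlus + pMinus))
    (hcontact : u x₁ = u x₀ + ⟪p₀, x₁ - x₀⟫) :
    ∀ lam ∈ Set.Icc (0:ℝ) 1,
      u ((1 - lam) • x₀ + lam • x₁)
          = u x₀ + max (⟪pPlus, ((1 - lam) • x₀ + lam • x₁) - x₀⟫)
              (⟪pMinus, ((1 - lam) • x₀ + lam • x₁) - x₀⟫) ∧
      p₀ ∈ subdiff Ω u ((1 - lam) • x₀ + lam • x₁) ∧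
      pPlus ∈ subdiff Ω u ((1 - lam) • x₀ + lam • x₁) ∧
      pMinus ∈ subdiff Ω u ((1 - lam) • x₀ + lam • x₁) ∧
      ¬ DifferentiableAt ℝ u ((1 - lam) • x₀ + lam • x₁) := by
  intro lam hlam
  obtain ⟨hlam0, hlam1⟩ := hlam
  set d : EuclideanSpace ℝ (Fin n) := x₁ - x₀ with hd
  set xl : EuclideanSpace ℝ (Fin n) := (1 - lam) • x₀ + lam • x₁ with hxl
  have hxld : xl - x₀ = lam • d := by
    simp only [hxl, hd]; module
  have hp₀d : ⟪p₀, d⟫ = 2⁻¹ * (⟪pPlus, d⟫ + ⟪pMinus, d⟫) := by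
    rw [hp₀, real_inner_smul_left, inner_add_left]
  -- the two subgradients have equal pairing with d
  have hA : u x₀ + ⟪pPlus, d⟫ ≤ u x₁ := hpPlus x₁ hx₁
  have hB : u x₀ + ⟪pMinus, d⟫ ≤ u x₁ := hpMinus x₁ hx₁
  have hcp : ⟪pPlus, d⟫ = ⟪pMinus, d⟫ := by
    rw [hcontact, hp₀d] at hA hB; linarith
  have hp₀d' : ⟪p₀, d⟫ = ⟪pPlus, d⟫ := by rw [hp₀d, hcp]; ring
  -- membership of xl in Ω
  have hxlΩ : xl ∈ Ω := hΩc hx₀ hx₁ (by linarith) hlam0 (by ring)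
  -- value of u at xl
  have hupper : u xl ≤ (1 - lam) * u x₀ + lam * u x₁ :=
    hu.2 hx₀ hx₁ (by linarith) hlam0 (by ring)
  have hlower : u x₀ + lam * ⟪pPlus, d⟫ ≤ u xl := by
    have := hpPlus xl hxlΩ
    rwa [hxld, real_inner_smul_right] at this
  have huxl : u xl = u x₀ + lam * ⟪pPlus, d⟫ := by
    rw [hcontact, hp₀d'] at hupper
    nlinarith
  -- p₀ is a subgradient at x₀
  have hp₀sub : p₀ ∈ subdiff Ω u x₀ := by
    intro y hy
    have h1 := hpPlus y hy
    have h2 := hpMinus y hy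
    have : ⟪p₀, y - x₀⟫ = 2⁻¹ * (⟪pPlus, y - x₀⟫ + ⟪pMinus, y - x₀⟫) := by
      rw [hp₀, real_inner_smul_left, inner_add_left]
    rw [this]; linarith
  -- generic transfer of subgradients from x₀ to xl
  have htrans : ∀ p : EuclideanSpace ℝ (Fin n), p ∈ subdiff Ω u x₀ →
      ⟪p, d⟫ = ⟪pPlus, d⟫ → p ∈ subdiff Ω u xl := by
    intro p hpsub hpd y hy
    have h1 := hpsub y hy
    have hsplit : ⟪p, y - xl⟫ = ⟪p, y - x₀⟫ - lam * ⟪p, d⟫ := by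
      have : y - xl = (y - x₀) - lam • d := by
        simp only [hxl, hd]; module
      rw [this, inner_sub_right, real_inner_smul_right]
    rw [huxl, hsplit, hpd]
    linarith
  have hsubP : pPlus ∈ subdiff Ω u xl := htrans pPlus hpPlus rfl
  have hsubM : pMinus ∈ subdiff Ω u xl := htrans pMinus hpMinus hcp.symm
  have hsub₀ : p₀ ∈ subdiff Ω u xl := htrans p₀ hp₀sub hp₀d'
  refine ⟨?_, hsub₀, hsubP, hsubM, ?_⟩
  · rw [hxld, real_inner_smul_right, real_inner_smul_right, hcp, max_self, huxl, hcp]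
  · -- non-differentiability
    intro hdiff
    set v : EuclideanSpace ℝ (Fin n) := pPlus - pMinus with hv
    have h1 : ⟪pPlus, v⟫ ≤ fderiv ℝ u xl v :=
      subdiff_inner_le_fderiv hΩo hxlΩ hsubP hdiff v
    have h2 : ⟪pMinus, -v⟫ ≤ fderiv ℝ u xl (-v) :=
      subdiff_inner_le_fderiv hΩo hxlΩ hsubM hdiff (-v)
    rw [inner_neg_right, map_neg] at h2
    have h3 : ⟪pPlus - pMinus, v⟫ ≤ 0 := by
      rw [inner_sub_left]; linarith
    have h4 : v = 0 := real_inner_self_nonpos.mp (by rwa [← hv] at h3)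
    exact hpne (sub_eq_zero.mp h4)
end
end

section
/- Let n ≥ 1, let Ω ⊆ ℝⁿ be open, let u : Ω → ℝ be convex, and let x₀, x₁ ∈ Ω be distinct points. Then the interior of the subdifferential ∂u(x₀) is disjoint from ∂u(x₁), i.e., int(∂u(x₀)) ∩ ∂u(x₁) = ∅. -/
open MeasureTheory Set Metric RealInnerProductSpace

noncomputable section

/-- **Interiors of subdifferentials at distinct points avoid other subdifferentials.**
For a convex function `u` on an open set `Ω ⊆ ℝⁿ` (convexity expressed by the existence of
a global supporting affine function at each point of `Ω`, as in the paper's `c`-convexity)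
and distinct points `x₀ ≠ x₁` of `Ω`, `int(∂u(x₀)) ∩ ∂u(x₁) = ∅`. -/
theorem interior_subdiff_disjoint_subdiff
    (n : ℕ) (hn : 1 ≤ n)
    (Ω : Set (EuclideanSpace ℝ (Fin n))) (hΩo : IsOpen Ω)
    (u : EuclideanSpace ℝ (Fin n) → ℝ)
    (hconv : ∀ x ∈ Ω, (subdiff Ω u x).Nonempty)
    (x₀ x₁ : EuclideanSpace ℝ (Fin n)) (hx₀ : x₀ ∈ Ω) (hx₁ : x₁ ∈ Ω) (hne : x₀ ≠ x₁) :
    interior (subdiff Ω u x₀) ∩ subdiff Ω u x₁ = ∅ := by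
  rw [eq_empty_iff_forall_notMem]
  rintro p ⟨hpi, hp1⟩
  obtain ⟨ε, hε, hball⟩ := Metric.isOpen_iff.mp isOpen_interior p hpi
  set d : EuclideanSpace ℝ (Fin n) := x₁ - x₀ with hd
  have hdne : d ≠ 0 := sub_ne_zero.mpr (Ne.symm hne)
  have hdnorm : 0 < ‖d‖ := norm_pos_iff.mpr hdne
  set c : ℝ := ε / (2 * ‖d‖) with hc
  have hcpos : 0 < c := by positivity
  have hq : p + c • d ∈ subdiff Ω u x₀ := by
    apply interior_subset (hball ?_)
    rw [Metric.mem_ball, dist_eq_norm, add_sub_cancel_left, norm_smul,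
      Real.norm_eq_abs, abs_of_pos hcpos, hc]
    have : ‖d‖ * (ε / (2 * ‖d‖)) = ε / 2 := by field_simp
    linarith
  have h1 := hq x₁ hx₁
  have h2 := hp1 x₀ hx₀
  have hkey : ⟪p + c • d, x₁ - x₀⟫ + ⟪p, x₀ - x₁⟫ ≤ 0 := by linarith
  rw [inner_add_left, real_inner_smul_left, ← hd, show x₀ - x₁ = -d by rw [hd]; abel,
    inner_neg_right] at hkey
  have hpos : ⟪d, d⟫ = ‖d‖ * ‖d‖ := real_inner_self_eq_norm_mul_norm d
  nlinarith [mul_pos hcpos (mul_pos hdnorm hdnorm)]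
end
end

section
/- Let n ≥ 1, let Ω ⊆ ℝⁿ be a bounded open set, let μ and ν be Borel probability measures on ℝⁿ, absolutely continuous with respect to Lebesgue measure, with spt μ ⊆ Ω, and let u be a Brenier solution on Ω pushing μ forward to ν. Then for every x₀ ∈ Ω, the interior of the subdifferential ∂u(x₀) is disjoint from spt ν, i.e., int(∂u(x₀)) ∩ spt ν = ∅. -/
open MeasureTheory Set Metric RealInnerProductSpace

noncomputable section

/-- The complement of the support of a measure is null (second countability). -/
lemma msupport_compl_null {n : ℕ} (μ : Measure (EuclideanSpace ℝ (Fin n))) :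
    μ (msupport μ)ᶜ = 0 := by
  apply measure_null_of_locally_null
  intro x hx
  simp only [msupport, mem_compl_iff, mem_setOf_eq, not_forall] at hx
  obtain ⟨U, hUo, hxU, hU0⟩ := hx
  push_neg at hU0
  exact ⟨U, mem_nhdsWithin_of_mem_nhds (hUo.mem_nhds hxU), hU0⟩

/-- A function with a nonempty subdifferential at every point of `Ω` is convex on every
ball contained in `Ω`. -/
lemma convexOn_ball_of_subdiff {n : ℕ} {Ω : Set (EuclideanSpace ℝ (Fin n))}
    {u : EuclideanSpace ℝ (Fin n) → ℝ}
    (h : ∀ x ∈ Ω, (subdiff Ω u x).Nonempty)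
    {c : EuclideanSpace ℝ (Fin n)} {r : ℝ} (hb : ball c r ⊆ Ω) :
    ConvexOn ℝ (ball c r) u := by
  refine ⟨convex_ball c r, fun x hx y hy a b ha hb' hab => ?_⟩
  set z := a • x + b • y with hzdef
  obtain ⟨p, hp⟩ := h z (hb ((convex_ball c r) hx hy ha hb' hab))
  have h1 := hp x (hb hx)
  have h2 := hp y (hb hy)
  have hz : a • (x - z) + b • (y - z) = (0 : EuclideanSpace ℝ (Fin n)) := by
    rw [smul_sub, smul_sub, sub_add_sub_comm, ← add_smul, hab, one_smul]
    exact sub_eq_zero.mpr rfl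
  have hinner : a * ⟪p, x - z⟫ + b * ⟪p, y - z⟫ = 0 := by
    rw [← real_inner_smul_right, ← real_inner_smul_right, ← inner_add_right, hz,
      inner_zero_right]
  have h3 : a * u z + b * u z = u z := by rw [← add_mul, hab, one_mul]
  have h1' := mul_le_mul_of_nonneg_left h1 ha
  have h2' := mul_le_mul_of_nonneg_left h2 hb'
  rw [mul_add] at h1' h2'
  simp only [smul_eq_mul]
  show u z ≤ a * u x + b * u y
  linarith

/-- A subgradient at a differentiability point is dominated (in every direction)
by the gradient. -/
lemma inner_le_gradient {n : ℕ} {Ω : Set (EuclideanSpace ℝ (Fin n))} (hΩ : IsOpen Ω)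
    {u : EuclideanSpace ℝ (Fin n) → ℝ} {x q : EuclideanSpace ℝ (Fin n)}
    (hx : x ∈ Ω) (hq : q ∈ subdiff Ω u x) (hd : DifferentiableAt ℝ u x)
    (v : EuclideanSpace ℝ (Fin n)) : ⟪q, v⟫ ≤ ⟪gradient u x, v⟫ := by
  have hf : HasFDerivAt u ((InnerProductSpace.toDual ℝ _) (gradient u x)) x :=
    hasGradientAt_iff_hasFDerivAt.mp hd.hasGradientAt
  have h0 : x + (0 : ℝ) • v = x := by simp
  have hc : HasDerivAt (fun t : ℝ => x + t • v) v 0 := by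
    simpa using ((hasDerivAt_id (0 : ℝ)).smul_const v).const_add x
  have hφ : HasDerivAt (fun t : ℝ => u (x + t • v)) ⟪gradient u x, v⟫ 0 := by
    have := HasFDerivAt.comp_hasDerivAt (0 : ℝ) (by rw [h0]; exact hf) hc
    simpa [InnerProductSpace.toDual_apply_apply, Function.comp_def] using this
  have hmem : ∀ᶠ t in nhdsWithin (0 : ℝ) (Ioi 0), x + t • v ∈ Ω := by
    have hcont : ContinuousAt (fun t : ℝ => x + t • v) 0 := by fun_prop
    have := hcont.eventually_mem (hΩ.mem_nhds (by rw [h0]; exact hx))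
    exact nhdsWithin_le_nhds this
  have hslope : ∀ᶠ t in nhdsWithin (0 : ℝ) (Ioi 0),
      ⟪q, v⟫ ≤ slope (fun t : ℝ => u (x + t • v)) 0 t := by
    filter_upwards [hmem, self_mem_nhdsWithin] with t htΩ ht
    have ht0 : (0 : ℝ) < t := ht
    have hb := hq _ htΩ
    have hin : ⟪q, x + t • v - x⟫ = t * ⟪q, v⟫ := by
      rw [add_sub_cancel_left, real_inner_smul_right]
    rw [hin] at hb
    rw [slope_def_field]
    simp only [h0, sub_zero]
    rw [le_div_iff₀ ht0]
    nlinarith [hb]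
  have htend : Filter.Tendsto (slope (fun t : ℝ => u (x + t • v)) 0)
      (nhdsWithin (0 : ℝ) (Ioi 0)) (nhds ⟪gradient u x, v⟫) :=
    (hasDerivAt_iff_tendsto_slope.mp hφ).mono_left
      (nhdsWithin_mono _ (fun t ht => ne_of_gt ht))
  exact ge_of_tendsto htend hslope

/-- At a point of differentiability, the gradient itself is a subgradient. -/
lemma gradient_mem_subdiff {n : ℕ} {Ω : Set (EuclideanSpace ℝ (Fin n))} (hΩ : IsOpen Ω)
    {u : EuclideanSpace ℝ (Fin n) → ℝ} {x : EuclideanSpace ℝ (Fin n)}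
    (hx : x ∈ Ω) (hne : (subdiff Ω u x).Nonempty) (hd : DifferentiableAt ℝ u x) :
    gradient u x ∈ subdiff Ω u x := by
  obtain ⟨q, hq⟩ := hne
  have h := inner_le_gradient hΩ hx hq hd (q - gradient u x)
  have h0 : ⟪q - gradient u x, q - gradient u x⟫ ≤ 0 := by
    rw [inner_sub_left]; linarith
  have : q - gradient u x = 0 := by
    have := real_inner_self_nonneg (x := q - gradient u x)
    have hz : ⟪q - gradient u x, q - gradient u x⟫ = 0 := le_antisymm h0 this
    exact inner_self_eq_zero.mp hz
  rw [sub_eq_zero] at this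
  rwa [← this]

/-- **Interior of any subdifferential is disjoint from the support of the target measure.**
(Euclidean case of a claim in the proof of the paper's proposition on full-dimensional
subdifferentials.) -/
theorem interior_subdiff_disjoint_target_support
    (n : ℕ) (hn : 1 ≤ n)
    (Ω : Set (EuclideanSpace ℝ (Fin n)))
    (hΩo : IsOpen Ω) (hΩb : Bornology.IsBounded Ω)
    (μ ν : Measure (EuclideanSpace ℝ (Fin n)))
    (hμp : IsProbabilityMeasure μ) (hνp : IsProbabilityMeasure ν)
    (hμac : μ ≪ volume) (hνac : ν ≪ volume)
    (hμs : msupport μ ⊆ Ω)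
    (u : EuclideanSpace ℝ (Fin n) → ℝ) (hu : IsBrenierSol Ω μ ν u) :
    ∀ x₀ ∈ Ω, interior (subdiff Ω u x₀) ∩ msupport ν = ∅ := by
  -- a.e. (w.r.t. Lebesgue) differentiability on Ω, via local Lipschitzness and Rademacher
  have hndiff : volume {x : EuclideanSpace ℝ (Fin n) | ¬ (x ∈ Ω → DifferentiableAt ℝ u x)}
      = 0 := by
    apply measure_null_of_locally_null
    intro x hx
    simp only [mem_setOf_eq, Classical.not_imp] at hx
    obtain ⟨hxΩ, hxd⟩ := hx
    obtain ⟨r, hr, hball⟩ := Metric.isOpen_iff.mp hΩo x hxΩ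
    have hconv := convexOn_ball_of_subdiff hu.convex hball
    have hll := hconv.locallyLipschitzOn isOpen_ball
    obtain ⟨K, t, ht, hK⟩ := hll (mem_ball_self hr)
    have htn : t ∈ nhds x := by
      rwa [isOpen_ball.nhdsWithin_eq (mem_ball_self hr)] at ht
    have hae := hK.ae_differentiableWithinAt_of_mem (μ := volume)
    refine ⟨{y | ¬ (y ∈ Ω → DifferentiableAt ℝ u y)} ∩ interior t,
      inter_mem_nhdsWithin _ (interior_mem_nhds.mpr htn), ?_⟩
    refine measure_mono_null ?_ (ae_iff.mp hae)
    rintro y ⟨hy1, hy2⟩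
    simp only [mem_setOf_eq, Classical.not_imp] at hy1 ⊢
    exact ⟨interior_subset hy2, fun hDW => hy1.2 (hDW.differentiableAt
      (mem_interior_iff_mem_nhds.mp hy2))⟩
  intro x₀ hx₀
  rw [eq_empty_iff_forall_notMem]
  rintro p ⟨hpV, hpν⟩
  -- key claim: no gradient at a differentiability point other than x₀ lies in the interior
  have key : ∀ x ∈ Ω, x ≠ x₀ → DifferentiableAt ℝ u x →
      gradient u x ∉ interior (subdiff Ω u x₀) := by
    intro x hx hne hd hgV
    have hgs : gradient u x ∈ subdiff Ω u x :=
      gradient_mem_subdiff hΩo hx (hu.convex x hx) hd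
    obtain ⟨ε, hε, hball⟩ := Metric.mem_nhds_iff.mp (mem_interior_iff_mem_nhds.mp hgV)
    set w := x - x₀ with hw
    have hw0 : w ≠ 0 := sub_ne_zero.mpr hne
    have hwn : (0 : ℝ) < ‖w‖ := norm_pos_iff.mpr hw0
    set δ := ε / (2 * ‖w‖) with hδ
    have hδ0 : 0 < δ := by positivity
    have heq : δ * ‖w‖ = ε / 2 := by
      rw [hδ]; field_simp
    have hp' : gradient u x + δ • w ∈ subdiff Ω u x₀ := by
      apply hball
      rw [mem_ball, dist_eq_norm]
      have hsub : gradient u x + δ • w - gradient u x = δ • w := by abel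
      rw [hsub, norm_smul, Real.norm_eq_abs, abs_of_pos hδ0, heq]
      linarith
    have h1 := hp' x hx
    have h2 := hgs x₀ hx₀
    have e1 : ⟪gradient u x + δ • w, x - x₀⟫ = ⟪gradient u x, w⟫ + δ * ⟪w, w⟫ := by
      rw [← hw, inner_add_left, real_inner_smul_left]
    have e2 : ⟪gradient u x, x₀ - x⟫ = - ⟪gradient u x, w⟫ := by
      rw [show x₀ - x = -w by rw [hw]; abel, inner_neg_right]
    have hww : 0 < ⟪w, w⟫ := by
      rw [real_inner_self_eq_norm_mul_norm]; exact mul_pos hwn hwn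
    rw [e1] at h1
    rw [e2] at h2
    nlinarith [mul_pos hδ0 hww]
  -- measure-theoretic conclusion
  have hmap := hu.map_grad
  have hg : AEMeasurable (fun x => gradient u x) μ := by
    by_contra h
    rw [Measure.map_of_not_aemeasurable h] at hmap
    have h1 := hνp.measure_univ
    rw [← hmap] at h1
    simp at h1
  have hν0 : ν (interior (subdiff Ω u x₀)) ≠ 0 := hpν _ isOpen_interior hpV
  apply hν0
  rw [← hmap, Measure.map_apply_of_aemeasurable hg isOpen_interior.measurableSet]
  haveI hone : Nonempty (Fin n) := ⟨⟨0, hn⟩⟩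
  haveI hnt : Nontrivial (EuclideanSpace ℝ (Fin n)) := by
    refine ⟨0, EuclideanSpace.single ⟨0, hn⟩ 1, fun h => ?_⟩
    have := congrArg (fun f => f ⟨0, hn⟩) h
    simp [EuclideanSpace.single_apply] at this
  have hx₀null : μ {x₀} = 0 := hμac (measure_singleton x₀)
  have hsupp : μ (msupport μ)ᶜ = 0 := msupport_compl_null μ
  have hbad : μ {x | ¬ (x ∈ Ω → DifferentiableAt ℝ u x)} = 0 := hμac hndiff
  refine measure_mono_null ?_
    (measure_union_null (measure_union_null hx₀null hsupp) hbad)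
  intro x hxV
  by_cases hxs : x ∈ msupport μ
  · by_cases hxd : DifferentiableAt ℝ u x
    · by_cases hxx : x = x₀
      · exact Or.inl (Or.inl hxx)
      · exact absurd hxV (key x (hμs hxs) hxx hxd)
    · exact Or.inr (fun him => hxd (him (hμs hxs)))
  · exact Or.inl (Or.inr hxs)
end
end

section
/- Let n ≥ 1, let Ω ⊆ ℝⁿ be a bounded open convex set, let u : Ω → ℝ be convex, let m₀(x) := ⟨x, x̄₀⟩ + λ₀ be an affine function (x̄₀ ∈ ℝⁿ, λ₀ ∈ ℝ), and let S₀ := {x ∈ Ω : u(x) ≤ m₀(x)}. Assume the closure of S₀ is compact and contained in Ω, and let x₀ ∈ int(S₀). Define the cone over S₀ with vertex x₀ by K(x) := sup{m(x) : m affine on ℝⁿ, m ≤ m₀ on frontier(S₀), and m(x₀) ≤ u(x₀)}. Then ∂K(x₀) ⊆ ⋃_{x ∈ S₀} ∂u(x), where ∂K(x₀) := {p ∈ ℝⁿ : K(y) ≥ K(x₀) + ⟨p, y − x₀⟩ for all y ∈ Ω}. -/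
open MeasureTheory Set Metric RealInnerProductSpace

noncomputable section

/-- **The subdifferential of the cone at its vertex is contained in `∂u(S₀)`.**
(Euclidean case of the first inclusion (2.3) in the paper's `c`-cone lemma: here
`m₀(x) = ⟨x, x̄₀⟩ + λ₀`, `S₀ = {u ≤ m₀}`, and `K` is the cone over `S₀` with vertex `x₀`,
the supremum of all affine functions `m(x) = ⟨x, q⟩ + b` with `m ≤ m₀` on `frontier S₀`
and `m(x₀) ≤ u(x₀)`.) -/
theorem cone_subdiff_subset_subdiff_of_section
    (n : ℕ) (hn : 1 ≤ n)
    (Ω : Set (EuclideanSpace ℝ (Fin n)))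
    (hΩo : IsOpen Ω) (hΩb : Bornology.IsBounded Ω) (hΩc : Convex ℝ Ω)
    (u : EuclideanSpace ℝ (Fin n) → ℝ) (hu : ConvexOn ℝ Ω u)
    (xbar₀ : EuclideanSpace ℝ (Fin n)) (lam₀ : ℝ)
    (S₀ : Set (EuclideanSpace ℝ (Fin n)))
    (hS₀ : S₀ = {x ∈ Ω | u x ≤ ⟪xbar₀, x⟫ + lam₀})
    (hcomp : IsCompact (closure S₀)) (hsub : closure S₀ ⊆ Ω)
    (x₀ : EuclideanSpace ℝ (Fin n)) (hx₀ : x₀ ∈ interior S₀)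
    (K : EuclideanSpace ℝ (Fin n) → ℝ)
    (hK : ∀ x, K x = sSup {t : ℝ | ∃ q : EuclideanSpace ℝ (Fin n), ∃ b : ℝ,
        (∀ z ∈ frontier S₀, ⟪q, z⟫ + b ≤ ⟪xbar₀, z⟫ + lam₀) ∧
        ⟪q, x₀⟫ + b ≤ u x₀ ∧ t = ⟪q, x⟫ + b}) :
    subdiff Ω K x₀ ⊆ ⋃ x ∈ S₀, subdiff Ω u x := by
  intro p hp
  have hx₀S : x₀ ∈ S₀ := interior_subset hx₀
  have hS₀Ω : S₀ ⊆ Ω := by rw [hS₀]; exact fun x hx => hx.1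
  have hx₀Ω : x₀ ∈ Ω := hS₀Ω hx₀S
  have hx₀le : u x₀ ≤ ⟪xbar₀, x₀⟫ + lam₀ := by
    rw [hS₀] at hx₀S; exact hx₀S.2
  have hucont : ContinuousOn u Ω := hu.continuousOn hΩo
  have hfrΩ : frontier S₀ ⊆ Ω := fun z hz => hsub (frontier_subset_closure hz)
  -- u ≥ m₀ on the frontier of S₀
  have hfr_ge : ∀ z ∈ frontier S₀, ⟪xbar₀, z⟫ + lam₀ ≤ u z := by
    intro z hz
    have hzΩ : z ∈ Ω := hfrΩ hz
    have hzc : z ∈ closure S₀ᶜ := by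
      rw [frontier_eq_closure_inter_closure] at hz; exact hz.2
    have hΩmem : Ω ∈ nhdsWithin z S₀ᶜ :=
      mem_nhdsWithin_of_mem_nhds (hΩo.mem_nhds hzΩ)
    have hne : (nhdsWithin z (Ω ∩ S₀ᶜ)).NeBot := by
      rw [nhdsWithin_inter_of_mem hΩmem]
      exact mem_closure_iff_nhdsWithin_neBot.mp hzc
    have hcont : ContinuousWithinAt (fun y => u y - (⟪xbar₀, y⟫ + lam₀)) (Ω ∩ S₀ᶜ) z := by
      refine ContinuousAt.continuousWithinAt ?_
      exact ((hucont.continuousAt (hΩo.mem_nhds hzΩ)).sub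
        (((continuous_const.inner continuous_id).add continuous_const).continuousAt))
    have hge : 0 ≤ u z - (⟪xbar₀, z⟫ + lam₀) := by
      refine ge_of_tendsto hcont ?_
      filter_upwards [self_mem_nhdsWithin] with y hy
      have : ¬ u y ≤ ⟪xbar₀, y⟫ + lam₀ := by
        intro h
        exact hy.2 (by rw [hS₀]; exact ⟨hy.1, h⟩)
      linarith [lt_of_not_ge this]
    linarith
  -- the admissible witness
  have hwit : (u x₀ : ℝ) ∈ {t : ℝ | ∃ q : EuclideanSpace ℝ (Fin n), ∃ b : ℝ,
      (∀ z ∈ frontier S₀, ⟪q, z⟫ + b ≤ ⟪xbar₀, z⟫ + lam₀) ∧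
      ⟪q, x₀⟫ + b ≤ u x₀ ∧ u x₀ = ⟪q, x₀⟫ + b} := by
    refine ⟨xbar₀, u x₀ - ⟪xbar₀, x₀⟫, ?_, le_of_eq (by ring), by ring⟩
    intro z hz; linarith
  have hwitx : ∀ x : EuclideanSpace ℝ (Fin n),
      {t : ℝ | ∃ q : EuclideanSpace ℝ (Fin n), ∃ b : ℝ,
      (∀ z ∈ frontier S₀, ⟪q, z⟫ + b ≤ ⟪xbar₀, z⟫ + lam₀) ∧
      ⟪q, x₀⟫ + b ≤ u x₀ ∧ t = ⟪q, x⟫ + b}.Nonempty := by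
    intro x
    exact ⟨⟪xbar₀, x⟫ + (u x₀ - ⟪xbar₀, x₀⟫), xbar₀, u x₀ - ⟪xbar₀, x₀⟫,
      fun z hz => by linarith, le_of_eq (by ring), rfl⟩
  -- K x₀ = u x₀
  have hKx₀ : K x₀ = u x₀ := by
    rw [hK x₀]
    apply le_antisymm
    · refine csSup_le (hwitx x₀) ?_
      rintro t ⟨q, b, _, h2, h3⟩
      rw [h3]; exact h2
    · refine le_csSup ⟨u x₀, ?_⟩ ?_
      · rintro t ⟨q, b, _, h2, h3⟩
        rw [h3]; exact h2
      · obtain ⟨q, b, h1, h2, h3⟩ := hwit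
        exact ⟨q, b, h1, h2, h3⟩
  -- K ≤ u on the frontier of S₀
  have hKfr : ∀ z ∈ frontier S₀, K z ≤ u z := by
    intro z hz
    rw [hK z]
    refine le_trans (csSup_le (hwitx z) ?_) (hfr_ge z hz)
    rintro t ⟨q, b, h1, _, h3⟩
    rw [h3]; exact h1 z hz
  -- the function g
  set g : EuclideanSpace ℝ (Fin n) → ℝ := fun y => u y - (u x₀ + ⟪p, y - x₀⟫) with hg
  have hg0 : g x₀ = 0 := by simp [hg]
  have hgfr : ∀ z ∈ frontier S₀, 0 ≤ g z := by
    intro z hz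
    have h1 := hp z (hfrΩ hz)
    rw [hKx₀] at h1
    have h2 := hKfr z hz
    simp only [hg]
    linarith
  have hgcont : ContinuousOn g (closure S₀) := by
    refine ContinuousOn.sub (hucont.mono hsub) ?_
    exact (continuous_const.add
      (continuous_const.inner (continuous_id.sub continuous_const))).continuousOn
  -- a minimizer of g on closure S₀ lying in the interior of S₀
  obtain ⟨x, hxint, hxmin, hgx0⟩ :
      ∃ x ∈ interior S₀, (∀ y ∈ closure S₀, g x ≤ g y) ∧ g x ≤ 0 := by
    obtain ⟨x, hxcl, hxmin⟩ := hcomp.exists_isMinOn ⟨x₀, subset_closure hx₀S⟩ hgcont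
    by_cases hc : g x < 0
    · refine ⟨x, ?_, fun y hy => hxmin hy, le_of_lt hc⟩
      by_contra hxi
      exact absurd (hgfr x ⟨hxcl, hxi⟩) (not_le.mpr hc)
    · push_neg at hc
      have hmin0 : g x = 0 := le_antisymm (by
        have := hxmin (subset_closure hx₀S)
        simpa [hg0] using this) hc
      exact ⟨x₀, hx₀, fun y hy => by rw [hg0, ← hmin0]; exact hxmin hy, le_of_eq hg0⟩
  have hxS : x ∈ S₀ := interior_subset hxint
  have hxΩ : x ∈ Ω := hS₀Ω hxS
  -- main claim: g x ≤ g y for all y ∈ Ω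
  have hmain : ∀ y ∈ Ω, g x ≤ g y := by
    intro y hyΩ
    by_cases hy : y ∈ closure S₀
    · exact hxmin y hy
    · -- the segment from x to y crosses the frontier of S₀
      obtain ⟨z, hzseg, hzfr⟩ : ∃ z ∈ segment ℝ x y, z ∈ frontier S₀ := by
        by_contra h
        push_neg at h
        have hsubset : segment ℝ x y ⊆ interior S₀ ∪ (closure S₀)ᶜ := by
          intro w hw
          have hwf := h w hw
          by_cases hwc : w ∈ closure S₀
          · left
            by_contra hwi
            exact hwf ⟨hwc, hwi⟩
          · right; exact hwc
        have := (convex_segment x y).isPreconnected (interior S₀) (closure S₀)ᶜ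
          isOpen_interior (isClosed_closure.isOpen_compl) hsubset
          ⟨x, left_mem_segment ℝ x y, hxint⟩
          ⟨y, right_mem_segment ℝ x y, hy⟩
        obtain ⟨w, _, hw1, hw2⟩ := this
        exact hw2 (subset_closure (interior_subset hw1))
      obtain ⟨a, b, ha, hb, hab, hz⟩ := hzseg
      have hzΩ : z ∈ Ω := hsub (frontier_subset_closure hzfr)
      have hbpos : 0 < b := by
        rcases lt_or_eq_of_le hb with h | h
        · exact h
        · exfalso
          have ha1 : a = 1 := by linarith
          have hzx : z = x := by rw [← hz, ← h, ha1]; simp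
          rw [hzx] at hzfr
          exact hzfr.2 hxint
      have huz : u z ≤ a * u x + b * u y := by
        have := hu.2 hxΩ hyΩ ha hb hab
        rw [hz] at this
        simpa [smul_eq_mul] using this
      have hinner : ⟪p, z - x₀⟫ = a * ⟪p, x - x₀⟫ + b * ⟪p, y - x₀⟫ := by
        have key : a • (x - x₀) + b • (y - x₀) = a • x + b • y - (a + b) • x₀ := by
          rw [add_smul, smul_sub, smul_sub]; abel
        have hzeq : z - x₀ = a • (x - x₀) + b • (y - x₀) := by
          rw [← hz, key, hab, one_smul]
        rw [hzeq, inner_add_right, inner_smul_right, inner_smul_right]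
      have hgz : g z ≤ a * g x + b * g y := by
        simp only [hg]
        rw [hinner]
        have h1 : a * u x₀ + b * u x₀ = u x₀ := by rw [← add_mul, hab, one_mul]
        linarith [huz]
      have h0z : 0 ≤ g z := hgfr z hzfr
      nlinarith [mul_nonneg ha (neg_nonneg.2 hgx0)]
  refine mem_iUnion₂.mpr ⟨x, hxS, ?_⟩
  intro y hyΩ
  have := hmain y hyΩ
  have hpyx : ⟪p, y - x⟫ = ⟪p, y - x₀⟫ - ⟪p, x - x₀⟫ := by
    rw [← inner_sub_right]; congr 1; abel
  simp only [hg] at this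
  rw [hpyx]
  linarith
end
end

section
/- Let n ≥ 1, let Ω ⊆ ℝⁿ be open and convex, let u : Ω → ℝ be convex, and let x₀ ∈ Ω be a point at which u is not differentiable. Suppose there is an open neighborhood N ⊆ Ω of x₀ such that u is differentiable at every point of N ∖ {x₀}. Then for every p in the frontier of the subdifferential ∂u(x₀), there exists a sequence of points x_k ∈ N ∖ {x₀} with x_k → x₀ such that u is differentiable at each x_k and ∇u(x_k) → p as k → ∞. -/
open MeasureTheory Set Metric RealInnerProductSpace

noncomputable section

section ACHelpers

variable {E : Type*} [NormedAddCommGroup E] [InnerProductSpace ℝ E] [CompleteSpace E]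


lemma AC_grad_eq (u : E → ℝ) (q x₀ xm : E) (hd : DifferentiableAt ℝ u xm)
    (hmin : IsLocalMin (fun x => u x - ⟪q, x⟫ + ‖x - x₀‖ ^ 2) xm) :
    HasGradientAt u (q - (2:ℝ) • (xm - x₀)) xm := by
  have h1 : HasFDerivAt (fun x : E => ⟪q, x⟫) (innerSL ℝ q) xm := by
    simpa using (innerSL ℝ q).hasFDerivAt
  have h2 : HasFDerivAt (fun x : E => ‖x - x₀‖ ^ 2)
      ((2 • innerSL ℝ (xm - x₀)).comp (ContinuousLinearMap.id ℝ E)) xm :=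
    ((hasFDerivAt_id xm).sub_const x₀).norm_sq
  have hw : HasFDerivAt (fun x => u x - ⟪q, x⟫ + ‖x - x₀‖ ^ 2)
      (fderiv ℝ u xm - innerSL ℝ q + (2 • innerSL ℝ (xm - x₀)).comp (ContinuousLinearMap.id ℝ E))
      xm := (hd.hasFDerivAt.sub h1).add h2
  have h0 := hmin.hasFDerivAt_eq_zero hw
  have hfd : (InnerProductSpace.toDual ℝ E) (q - (2:ℝ) • (xm - x₀)) = fderiv ℝ u xm := by
    ext v
    have hv := ContinuousLinearMap.ext_iff.1 h0 v
    simp only [ContinuousLinearMap.add_apply, ContinuousLinearMap.sub_apply,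
      ContinuousLinearMap.coe_comp', Function.comp_apply, ContinuousLinearMap.coe_id', id_eq,
      ContinuousLinearMap.smul_apply, innerSL_apply_apply, smul_eq_mul,
      ContinuousLinearMap.zero_apply, nsmul_eq_mul, Nat.cast_ofNat, inner_sub_left] at hv
    simp only [InnerProductSpace.toDual_apply_apply, inner_sub_left, real_inner_smul_left]
    linarith
  rw [hasGradientAt_iff_hasFDerivAt, hfd]
  exact hd.hasFDerivAt


lemma AC_key [ProperSpace E] (Ω : Set E) (hΩc : Convex ℝ Ω) (u : E → ℝ)
    (hu : ConvexOn ℝ Ω u) (hucont : ContinuousOn u Ω)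
    (x₀ : E) (hx₀ : x₀ ∈ Ω) (r : ℝ) (hr : 0 < r) (hrΩ : closedBall x₀ r ⊆ Ω)
    (hdiff : ∀ x ∈ closedBall x₀ r, x ≠ x₀ → DifferentiableAt ℝ u x)
    (p q : E) (hpS : ∀ y ∈ Ω, u x₀ + ⟪p, y - x₀⟫ ≤ u y)
    (hqS : ¬ ∀ y ∈ Ω, u x₀ + ⟪q, y - x₀⟫ ≤ u y) (hqp : ‖q - p‖ < r) :
    ∃ x ∈ ball x₀ r, x ≠ x₀ ∧ DifferentiableAt ℝ u x ∧
      gradient u x = q - (2:ℝ) • (x - x₀) := by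
  set w : E → ℝ := fun x => u x - ⟪q, x⟫ + ‖x - x₀‖ ^ 2 with hw
  have hwcont : ContinuousOn w (closedBall x₀ r) := by
    apply ContinuousOn.add
    · exact (hucont.mono hrΩ).sub ((continuous_const.inner continuous_id).continuousOn)
    · exact (((continuous_id.sub continuous_const).norm).pow 2).continuousOn
  obtain ⟨xm, hxmB, hxmmin⟩ := (isCompact_closedBall x₀ r).exists_isMinOn
    (nonempty_closedBall.2 hr.le) hwcont
  have hball : xm ∈ ball x₀ r := by
    by_contra hb
    have hdist : ‖xm - x₀‖ = r := by
      have h1 := mem_closedBall.1 hxmB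
      have h2 := not_lt.1 (fun h => hb (mem_ball.2 h))
      rw [dist_eq_norm] at h1 h2; linarith
    have h1 : w xm ≤ w x₀ := hxmmin (mem_closedBall_self hr.le)
    have h2 : u x₀ + ⟪p, xm - x₀⟫ ≤ u xm := hpS xm (hrΩ hxmB)
    have h3 : |⟪p - q, xm - x₀⟫| ≤ ‖p - q‖ * ‖xm - x₀‖ := abs_real_inner_le_norm _ _
    have h4 : ‖p - q‖ < r := by rwa [norm_sub_rev]
    have e1 : w xm = u xm - ⟪q, xm⟫ + r ^ 2 := by simp only [hw, hdist]
    have e4 : ⟪q, xm⟫ = ⟪q, xm - x₀⟫ + ⟪q, x₀⟫ := by rw [← inner_add_right]; simp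
    have e2 : w x₀ = u x₀ - ⟪q, x₀⟫ := by simp [hw]
    have e3 : ⟪p - q, xm - x₀⟫ = ⟪p, xm - x₀⟫ - ⟪q, xm - x₀⟫ := inner_sub_left _ _ _
    have h5 : |⟪p - q, xm - x₀⟫| < r ^ 2 := by
      rw [hdist] at h3; nlinarith
    rw [abs_lt] at h5
    rw [e1, e2] at h1
    linarith [h5.1, h5.2]
  have hne : xm ≠ x₀ := by
    rintro rfl
    apply hqS
    intro y hy
    rcases eq_or_ne y xm with rfl | hyne
    · simp
    have hC : (0:ℝ) < ‖y - xm‖ := by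
      rw [norm_pos_iff, sub_ne_zero]; exact hyne
    set C := ‖y - xm‖ with hCdef
    apply le_of_forall_pos_le_add
    intro δ hδ
    set t : ℝ := min (min 1 (r / C)) (δ / C ^ 2) with htdef
    have ht0 : 0 < t := by
      apply lt_min (lt_min one_pos (div_pos hr hC)) (div_pos hδ (by positivity))
    have ht1 : t ≤ 1 := le_trans (min_le_left _ _) (min_le_left _ _)
    have htr : t * C ≤ r := by
      have h : t ≤ r / C := le_trans (min_le_left _ _) (min_le_right 1 (r / C))
      calc t * C ≤ (r / C) * C := by nlinarith [h]
        _ = r := by field_simp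
    have htδ : t * C ^ 2 ≤ δ := by
      have h : t ≤ δ / C ^ 2 := min_le_right (min 1 (r / C)) (δ / C ^ 2)
      calc t * C ^ 2 ≤ (δ / C ^ 2) * C ^ 2 := by nlinarith [h]
        _ = δ := by field_simp
    set z : E := xm + t • (y - xm) with hzdef
    have hzball : z ∈ closedBall xm r := by
      rw [mem_closedBall, dist_eq_norm]
      simp only [hzdef, add_sub_cancel_left, norm_smul, Real.norm_eq_abs, abs_of_pos ht0]
      exact htr
    have hminz : w xm ≤ w z := hxmmin hzball
    have hconv : u z ≤ (1 - t) * u xm + t * u y := by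
      have := hu.2 hx₀ hy (by linarith : (0:ℝ) ≤ 1 - t) ht0.le (by ring)
      have hz : z = (1 - t) • xm + t • y := by rw [hzdef]; module
      rw [hz]; exact this
    have hz1 : ‖z - xm‖ ^ 2 = t ^ 2 * C ^ 2 := by
      simp only [hzdef, add_sub_cancel_left, norm_smul, Real.norm_eq_abs, abs_of_pos ht0]
      ring
    have hz2 : ⟪q, z⟫ = ⟪q, xm⟫ + t * ⟪q, y - xm⟫ := by
      simp only [hzdef, inner_add_right, real_inner_smul_right]
    have hexp : u xm ≤ u z - t * ⟪q, y - xm⟫ + t ^ 2 * C ^ 2 := by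
      have e2 : w xm = u xm - ⟪q, xm⟫ := by simp [hw]
      have e3 : w z = u z - (⟪q, xm⟫ + t * ⟪q, y - xm⟫) + t ^ 2 * C ^ 2 := by
        simp only [hw, hz2]; rw [hz1]
      rw [e2, e3] at hminz; linarith
    nlinarith [hexp, hconv]
  refine ⟨xm, hball, hne, hdiff xm hxmB hne, ?_⟩
  have hloc : IsLocalMin w xm :=
    hxmmin.isLocalMin (Filter.mem_of_superset (isOpen_ball.mem_nhds hball) ball_subset_closedBall)
  exact (AC_grad_eq u q x₀ xm (hdiff xm hxmB hne) hloc).gradient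

end ACHelpers

/-- **Albano–Cannarsa singularity propagation (convex Euclidean case).** If the convex
function `u` is not differentiable at `x₀ ∈ Ω` but is differentiable on `N \ {x₀}` for an
open neighborhood `N ⊆ Ω` of `x₀`, then every point of the frontier of `∂u(x₀)` is the
limit of gradients `∇u(x_k)` along a sequence `x_k → x₀` of points of differentiability. -/
theorem frontier_subdiff_is_limit_of_gradients
    (n : ℕ) (hn : 1 ≤ n)
    (Ω : Set (EuclideanSpace ℝ (Fin n))) (hΩo : IsOpen Ω) (hΩc : Convex ℝ Ω)
    (u : EuclideanSpace ℝ (Fin n) → ℝ) (hu : ConvexOn ℝ Ω u)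
    (x₀ : EuclideanSpace ℝ (Fin n)) (hx₀ : x₀ ∈ Ω)
    (hnd : ¬ DifferentiableAt ℝ u x₀)
    (N : Set (EuclideanSpace ℝ (Fin n))) (hN : N ⊆ Ω) (hNo : IsOpen N) (hx₀N : x₀ ∈ N)
    (hdiff : ∀ x ∈ N \ {x₀}, DifferentiableAt ℝ u x) :
    ∀ p ∈ frontier (subdiff Ω u x₀),
      ∃ x : ℕ → EuclideanSpace ℝ (Fin n),
        (∀ k, x k ∈ N \ {x₀} ∧ DifferentiableAt ℝ u (x k)) ∧
        Filter.Tendsto x Filter.atTop (nhds x₀) ∧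
        Filter.Tendsto (fun k => gradient u (x k)) Filter.atTop (nhds p) := by
  intro p hp
  set S := subdiff Ω u x₀ with hSdef
  have hSclosed : IsClosed S := by
    have hEq : S = ⋂ y ∈ Ω, {q | u x₀ + ⟪q, y - x₀⟫ ≤ u y} := by
      ext q; simp [hSdef, subdiff, Set.mem_iInter]
    rw [hEq]
    exact isClosed_biInter fun y _ => isClosed_le
      (continuous_const.add (continuous_id.inner continuous_const)) continuous_const
  have hpS : p ∈ S := by
    have := frontier_subset_closure hp
    rwa [hSclosed.closure_eq] at this
  have hpc : p ∈ closure Sᶜ := by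
    rw [frontier_eq_closure_inter_closure] at hp
    exact hp.2
  have hucont : ContinuousOn u Ω := hu.continuousOn hΩo
  obtain ⟨r₀, hr₀pos, hr₀⟩ : ∃ r₀ > 0, closedBall x₀ r₀ ⊆ N := by
    obtain ⟨r, hr, h⟩ := Metric.isOpen_iff.1 hNo x₀ hx₀N
    exact ⟨r / 2, by positivity, (closedBall_subset_ball (by linarith)).trans h⟩
  have key : ∀ r : ℝ, 0 < r → r ≤ r₀ → ∃ x, x ∈ ball x₀ r ∧ x ≠ x₀ ∧
      DifferentiableAt ℝ u x ∧ ‖gradient u x - p‖ < 3 * r := by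
    intro r h0 hle
    obtain ⟨q, hqc, hqd⟩ := Metric.mem_closure_iff.1 hpc r h0
    have hqp : ‖q - p‖ < r := by rwa [dist_comm, dist_eq_norm] at hqd
    have hrN : closedBall x₀ r ⊆ N := (closedBall_subset_closedBall hle).trans hr₀
    have hrΩ : closedBall x₀ r ⊆ Ω := hrN.trans hN
    have hdiff' : ∀ x ∈ closedBall x₀ r, x ≠ x₀ → DifferentiableAt ℝ u x :=
      fun x hx hne => hdiff x ⟨hrN hx, hne⟩
    have hqS : ¬ ∀ y ∈ Ω, u x₀ + ⟪q, y - x₀⟫ ≤ u y := hqc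
    obtain ⟨x, hxball, hxne, hxdiff, hxgrad⟩ :=
      AC_key Ω hΩc u hu hucont x₀ hx₀ r h0 hrΩ hdiff' p q hpS hqS hqp
    refine ⟨x, hxball, hxne, hxdiff, ?_⟩
    have hxr : ‖x - x₀‖ < r := by rwa [mem_ball, dist_eq_norm] at hxball
    have e : gradient u x - p = (q - p) - (2:ℝ) • (x - x₀) := by rw [hxgrad]; abel
    calc ‖gradient u x - p‖ ≤ ‖q - p‖ + ‖(2:ℝ) • (x - x₀)‖ := by
          rw [e]; exact norm_sub_le _ _
      _ = ‖q - p‖ + 2 * ‖x - x₀‖ := by rw [norm_smul]; simp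
      _ < 3 * r := by linarith
  have hseq : ∀ k : ℕ, ∃ x, x ∈ ball x₀ (min r₀ (1 / (k + 1))) ∧ x ≠ x₀ ∧
      DifferentiableAt ℝ u x ∧ ‖gradient u x - p‖ < 3 * min r₀ (1 / (k + 1)) :=
    fun k => key _ (lt_min hr₀pos (by positivity)) (min_le_left _ _)
  choose x hx1 hx2 hx3 hx4 using hseq
  have hxN : ∀ k, x k ∈ N \ {x₀} := by
    intro k
    refine ⟨hr₀ (ball_subset_closedBall.trans (closedBall_subset_closedBall (min_le_left _ _))
      (hx1 k)), hx2 k⟩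
  have hdb : ∀ k : ℕ, dist (x k) x₀ ≤ 1 / (k + 1) := fun k =>
    le_trans (le_of_lt (mem_ball.1 (hx1 k))) (min_le_right _ _)
  have hgb : ∀ k : ℕ, dist (gradient u (x k)) p ≤ 3 * (1 / (k + 1)) := by
    intro k
    rw [dist_eq_norm]
    have := (hx4 k).le
    have h2 : min r₀ (1 / (k + 1 : ℝ)) ≤ 1 / (k + 1) := min_le_right _ _
    nlinarith
  have hlim : Filter.Tendsto (fun k : ℕ => 1 / ((k : ℝ) + 1)) Filter.atTop (nhds 0) :=
    tendsto_one_div_add_atTop_nhds_zero_nat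
  refine ⟨x, fun k => ⟨hxN k, hx3 k⟩, ?_, ?_⟩
  · rw [tendsto_iff_dist_tendsto_zero]
    exact squeeze_zero (fun k => dist_nonneg) hdb hlim
  · rw [tendsto_iff_dist_tendsto_zero]
    refine squeeze_zero (fun k => dist_nonneg) hgb ?_
    have := hlim.const_mul (3:ℝ)
    simpa using this
end
end
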